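/- arXiv:2211.05609 — 13 statements merged into one kernel-verified Lean document; each statement's English description precedes it below -/
import Mathlib

section
/- Let ε, r > 0 and define (c_n) by c₀ = r+ε and c_{n+1} = r+ε − r²/(r+ε+c_n). Set c := √(ε²+2rε). Then c is a fixed point of the recursion (c = r+ε − r²/(r+ε+c)), the sequence (c_n) is strictly decreasing, c_n > c for every n, and c_n → c as n → ∞. -/
open Real Filter

theorem stmt_2 (ε r : ℝ) (hε : 0 < ε) (hr : 0 < r)
    (c : ℕ → ℝ) (hc0 : c 0 = r + ε)
    (hcrec : ∀ n, c (n + 1) = r + ε - r ^ 2 / (r + ε + c n)) :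
    Real.sqrt (ε ^ 2 + 2 * r * ε) =
      r + ε - r ^ 2 / (r + ε + Real.sqrt (ε ^ 2 + 2 * r * ε)) ∧
    StrictAnti c ∧
    (∀ n, Real.sqrt (ε ^ 2 + 2 * r * ε) < c n) ∧
    Filter.Tendsto c Filter.atTop (nhds (Real.sqrt (ε ^ 2 + 2 * r * ε))) := by
  set L := Real.sqrt (ε ^ 2 + 2 * r * ε) with hLdef
  have hLsq : L ^ 2 = ε ^ 2 + 2 * r * ε := Real.sq_sqrt (by positivity)
  have hLpos : 0 < L := Real.sqrt_pos.mpr (by positivity)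
  have hLlt : L < r + ε := by nlinarith
  have hden : 0 < r + ε + L := by linarith
  have hfix : L = r + ε - r ^ 2 / (r + ε + L) := by
    field_simp
    nlinarith
  have hgt : ∀ n, L < c n := by
    intro n
    induction n with
    | zero => rw [hc0]; exact hLlt
    | succ n ih =>
      rw [hcrec]
      have hd : 0 < r + ε + c n := by linarith
      have h1 : r ^ 2 / (r + ε + c n) < r + ε - L := by
        rw [div_lt_iff₀ hd]; nlinarith
      linarith
  have hstep : ∀ n, c (n + 1) < c n := by
    intro n
    have hd : 0 < r + ε + c n := by linarith [hgt n]
    rw [hcrec]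
    have h1 : r + ε - c n < r ^ 2 / (r + ε + c n) := by
      rw [lt_div_iff₀ hd]; nlinarith [hgt n]
    linarith
  set k := r ^ 2 / (r + ε + L) ^ 2 with hkdef
  have hk0 : 0 ≤ k := by positivity
  have hk1 : k < 1 := by
    rw [hkdef, div_lt_one (by positivity)]; nlinarith
  have hcontr : ∀ n, c (n + 1) - L ≤ k * (c n - L) := by
    intro n
    have hd : 0 < r + ε + c n := by linarith [hgt n]
    have e : c (n + 1) - L = r ^ 2 * (c n - L) / ((r + ε + L) * (r + ε + c n)) := by
      have h1 : r + ε - L = r ^ 2 / (r + ε + L) := by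
        rw [eq_div_iff hden.ne']
        linear_combination -hLsq
      rw [hcrec, sub_right_comm, h1, div_sub_div _ _ hden.ne' hd.ne']
      congr 1
      ring
    rw [e, hkdef]
    have e2 : r ^ 2 / (r + ε + L) ^ 2 * (c n - L)
        = r ^ 2 * (c n - L) / ((r + ε + L) ^ 2) := by ring
    rw [e2]
    have hnum : 0 ≤ r ^ 2 * (c n - L) := by nlinarith [hgt n]
    apply div_le_div_of_nonneg_left hnum (by positivity)
    nlinarith [hgt n]
  have hbound : ∀ n, c n - L ≤ (c 0 - L) * k ^ n := by
    intro n
    induction n with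
    | zero => simp
    | succ n ih =>
      calc c (n + 1) - L ≤ k * (c n - L) := hcontr n
        _ ≤ k * ((c 0 - L) * k ^ n) := by
            apply mul_le_mul_of_nonneg_left ih hk0
        _ = (c 0 - L) * k ^ (n + 1) := by ring
  refine ⟨hfix, strictAnti_nat_of_succ_lt hstep, hgt, ?_⟩
  have hupper : Tendsto (fun n => L + (c 0 - L) * k ^ n) atTop (nhds L) := by
    have h0 : Tendsto (fun n : ℕ => k ^ n) atTop (nhds 0) :=
      tendsto_pow_atTop_nhds_zero_of_lt_one hk0 hk1
    have h1 : Tendsto (fun n : ℕ => L + (c 0 - L) * k ^ n) atTop (nhds (L + (c 0 - L) * 0)) :=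
      Tendsto.add tendsto_const_nhds (h0.const_mul (c 0 - L))
    simpa using h1
  refine tendsto_of_tendsto_of_tendsto_of_le_of_le tendsto_const_nhds hupper
    (fun n => (hgt n).le) (fun n => by linarith [hbound n])
end

section
/- Let ε, r > 0 and define (c_n) by c₀ = r+ε and c_{n+1} = r+ε − r²/(r+ε+c_n), and set ρ_m := r/(c₀+c_{m−1}) for m ≥ 1. Then for every n ∈ ℕ one has ε < √(ε²+2rε) ≤ c_n ≤ r+ε (in fact √(ε²+2rε) < c_n for all n), and consequently for every m ≥ 1, r/(2r+2ε) ≤ ρ_m ≤ r/(2ε+r). -/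
open Real

theorem stmt_3 (ε r : ℝ) (hε : 0 < ε) (hr : 0 < r)
    (c : ℕ → ℝ) (hc0 : c 0 = r + ε)
    (hcrec : ∀ n, c (n + 1) = r + ε - r ^ 2 / (r + ε + c n))
    (ρ : ℕ → ℝ) (hρ : ∀ m, 1 ≤ m → ρ m = r / (c 0 + c (m - 1))) :
    (∀ n, ε < Real.sqrt (ε ^ 2 + 2 * r * ε) ∧
      Real.sqrt (ε ^ 2 + 2 * r * ε) < c n ∧ c n ≤ r + ε) ∧
    (∀ m, 1 ≤ m → r / (2 * r + 2 * ε) ≤ ρ m ∧ ρ m ≤ r / (2 * ε + r)) := by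
  set s := Real.sqrt (ε ^ 2 + 2 * r * ε) with hs
  have hnn : (0:ℝ) ≤ ε ^ 2 + 2 * r * ε := by nlinarith
  have hs2 : s ^ 2 = ε ^ 2 + 2 * r * ε := Real.sq_sqrt hnn
  have hεs : ε < s := by
    nlinarith [Real.sqrt_nonneg (ε ^ 2 + 2 * r * ε), hs2]
  have hs0 : 0 < s := lt_trans hε hεs
  have key : ∀ n, s < c n ∧ c n ≤ r + ε := by
    intro n
    induction n with
    | zero =>
      refine ⟨?_, by rw [hc0]⟩
      rw [hc0]; nlinarith
    | succ k ih =>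
      obtain ⟨h1, h2⟩ := ih
      have hd : 0 < r + ε + c k := by linarith
      have hpos : 0 < r ^ 2 / (r + ε + c k) := by positivity
      constructor
      · rw [hcrec k]
        have : r ^ 2 / (r + ε + c k) < r + ε - s := by
          rw [div_lt_iff₀ hd]
          nlinarith [mul_pos (show (0:ℝ) < r + ε - s by nlinarith) (show (0:ℝ) < c k - s by linarith)]
        linarith
      · rw [hcrec k]; linarith
  refine ⟨fun n => ⟨hεs, (key n).1, (key n).2⟩, fun m hm => ?_⟩
  rw [hρ m hm]
  obtain ⟨h1, h2⟩ := key (m - 1)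
  have hd : 0 < c 0 + c (m - 1) := by rw [hc0]; linarith
  constructor
  · apply div_le_div_of_nonneg_left hr.le hd
    rw [hc0]; linarith
  · apply div_le_div_of_nonneg_left hr.le (by linarith)
    rw [hc0]; linarith
end

section
/- Let δ > 0, p := √(δ²+2δ), A := (1+δ+p)/(1+δ−p), and N := ⌊δ^{−1/2}⌋. There exist constants C > 0 and δ₀ ∈ (0,1) such that for all δ ∈ (0,δ₀) and all integers n with 0 ≤ n ≤ N one has |A^{n+1} − 1 − 2√2·(n+1)·δ^{1/2}| ≤ C·(n+1)²·δ. In particular |A − 1 − 2√2·δ^{1/2} − 4δ| ≤ C·δ^{3/2}. -/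
open Real

noncomputable def Aa (δ : ℝ) : ℝ :=
  (1 + δ + Real.sqrt (δ ^ 2 + 2 * δ)) / (1 + δ - Real.sqrt (δ ^ 2 + 2 * δ))

lemma A_eq {δ : ℝ} (h0 : 0 < δ) :
    Aa δ = (1 + δ + Real.sqrt (δ ^ 2 + 2 * δ)) ^ 2 := by
  have hnn : (0:ℝ) ≤ δ ^ 2 + 2 * δ := by positivity
  have hp2 : (Real.sqrt (δ ^ 2 + 2 * δ)) ^ 2 = δ ^ 2 + 2 * δ := Real.sq_sqrt hnn
  have hp0 : 0 ≤ Real.sqrt (δ ^ 2 + 2 * δ) := Real.sqrt_nonneg _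
  have hlt : Real.sqrt (δ ^ 2 + 2 * δ) < 1 + δ := by nlinarith
  have hden : 0 < 1 + δ - Real.sqrt (δ ^ 2 + 2 * δ) := by linarith
  rw [Aa, div_eq_iff (ne_of_gt hden)]
  linear_combination (1 + δ + Real.sqrt (δ ^ 2 + 2 * δ)) * hp2

set_option maxHeartbeats 1000000 in
lemma facts {δ : ℝ} (h0 : 0 < δ) (h1 : δ < 1/16) :
    (1 ≤ Aa δ) ∧ (Aa δ - 1 ≤ 7 * Real.sqrt δ) ∧
    (|Aa δ - 1 - 2 * Real.sqrt 2 * Real.sqrt δ| ≤ 6 * δ) ∧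
    (|Aa δ - 1 - 2 * Real.sqrt 2 * Real.sqrt δ - 4 * δ| ≤ 7 * (Real.sqrt δ)^3) := by
  set s := Real.sqrt δ with hsdef
  set p := Real.sqrt (δ ^ 2 + 2 * δ) with hpdef
  set r := Real.sqrt 2 with hrdef
  have hnn : (0:ℝ) ≤ δ ^ 2 + 2 * δ := by positivity
  have hs2 : s ^ 2 = δ := Real.sq_sqrt h0.le
  have hs0 : 0 < s := Real.sqrt_pos.mpr h0
  have hs4 : s ≤ 1/4 := by
    rw [hsdef, show (1/4 : ℝ) = Real.sqrt ((1/4)^2) by rw [Real.sqrt_sq]; norm_num]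
    exact Real.sqrt_le_sqrt (by nlinarith)
  have hp2 : p ^ 2 = δ ^ 2 + 2 * δ := Real.sq_sqrt hnn
  have hp0 : 0 ≤ p := Real.sqrt_nonneg _
  have hr2 : r ^ 2 = 2 := Real.sq_sqrt (by norm_num)
  have hr0 : 0 ≤ r := Real.sqrt_nonneg _
  have hr1 : 1 ≤ r := by nlinarith
  have hr3 : r ≤ 3/2 := by nlinarith
  have hpu : p ≤ 2 * s := by
    have h4 : δ ^ 2 + 2 * δ ≤ (2*s)^2 := by nlinarith
    calc p ≤ Real.sqrt ((2*s)^2) := Real.sqrt_le_sqrt h4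
    _ = 2*s := Real.sqrt_sq (by positivity)
  have hpl : r * s ≤ p := by
    have : (r*s)^2 ≤ p^2 := by nlinarith
    nlinarith
  have hpu2 : p ≤ r * s + s^3 := by
    have e : (r*s + s^3)^2 = 2*s^2 + 2*r*s^4 + s^6 := by linear_combination (s^2) * hr2
    have hd2 : δ^2 = s^4 := by rw [← hs2]; ring
    have h4 : δ ^ 2 + 2 * δ ≤ (r*s + s^3)^2 := by
      rw [e, hd2, ← hs2]
      nlinarith [pow_nonneg hs0.le 4, pow_nonneg hs0.le 6]
    calc p ≤ Real.sqrt ((r*s + s^3)^2) := Real.sqrt_le_sqrt h4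
    _ = r*s + s^3 := Real.sqrt_sq (by positivity)
  have hA : Aa δ = (1 + δ + p) ^ 2 := A_eq h0
  have hA1 : Aa δ - 1 = 2*δ^2 + 4*δ + 2*p + 2*δ*p := by
    rw [hA]; linear_combination hp2
  have hs3 : s^3 = s*δ := by rw [← hs2]; ring
  have hd2 : δ^2 = s^4 := by rw [← hs2]; ring
  have hsd : s*δ ≤ (1/4)*δ := mul_le_mul_of_nonneg_right hs4 h0.le
  have hdp : δ*p ≤ δ*(2*s) := mul_le_mul_of_nonneg_left hpu h0.le
  have hdp0 : 0 ≤ δ*p := mul_nonneg h0.le hp0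
  refine ⟨by nlinarith, by nlinarith, ?_, ?_⟩
  · rw [abs_le]
    constructor
    · nlinarith
    · nlinarith
  · rw [abs_le]
    constructor
    · nlinarith
    · nlinarith

lemma pow_bound {δ : ℝ} (h0 : 0 < δ) (h1 : δ < 1/16) (m : ℕ)
    (hm : (m : ℝ) * Real.sqrt δ ≤ 2) : Aa δ ^ m ≤ Real.exp 14 := by
  obtain ⟨hA1, hA7, -, -⟩ := facts h0 h1
  have hs0 : 0 ≤ Real.sqrt δ := Real.sqrt_nonneg δ
  have he : Aa δ ≤ Real.exp (7 * Real.sqrt δ) := by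
    have := Real.add_one_le_exp (7 * Real.sqrt δ)
    linarith
  calc Aa δ ^ m ≤ (Real.exp (7 * Real.sqrt δ)) ^ m :=
        pow_le_pow_left₀ (by linarith) he m
    _ = Real.exp ((m : ℝ) * (7 * Real.sqrt δ)) := (Real.exp_nat_mul _ m).symm
    _ ≤ Real.exp 14 := by
        apply Real.exp_le_exp.mpr
        nlinarith

lemma geom_bound {δ : ℝ} (h0 : 0 < δ) (h1 : δ < 1/16) :
    ∀ m : ℕ, (m : ℝ) * Real.sqrt δ ≤ 2 →
      Aa δ ^ m - 1 ≤ 7 * Real.sqrt δ * m * Real.exp 14 := by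
  obtain ⟨hA1, hA7, -, -⟩ := facts h0 h1
  have hs0 : 0 ≤ Real.sqrt δ := Real.sqrt_nonneg δ
  intro m
  induction m with
  | zero => intro _; simp
  | succ m ih =>
    intro hm
    have hm' : (m : ℝ) * Real.sqrt δ ≤ 2 := by push_cast at hm ⊢; nlinarith
    have IH := ih hm'
    have hB := pow_bound h0 h1 m hm'
    have hB0 : (1:ℝ) ≤ Aa δ ^ m := one_le_pow₀ hA1
    have key : Aa δ ^ (m+1) - 1 = Aa δ ^ m * (Aa δ - 1) + (Aa δ ^ m - 1) := by ring
    have h2 : Aa δ ^ m * (Aa δ - 1) ≤ Real.exp 14 * (7 * Real.sqrt δ) := by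
      apply mul_le_mul hB hA7 (by linarith) (Real.exp_pos 14).le
    push_cast
    nlinarith

lemma main_bound {δ : ℝ} (h0 : 0 < δ) (h1 : δ < 1/16) :
    ∀ m : ℕ, (m : ℝ) * Real.sqrt δ ≤ 2 →
      |Aa δ ^ m - 1 - 2 * Real.sqrt 2 * (m : ℝ) * Real.sqrt δ|
        ≤ 21 * Real.exp 14 * (m : ℝ) ^ 2 * δ := by
  obtain ⟨hA1, hA7, h6, -⟩ := facts h0 h1
  have hs0 : 0 < Real.sqrt δ := Real.sqrt_pos.mpr h0
  have hs2 : (Real.sqrt δ) ^ 2 = δ := Real.sq_sqrt h0.le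
  have hr0 : 0 ≤ Real.sqrt 2 := Real.sqrt_nonneg 2
  have hr3 : Real.sqrt 2 ≤ 3/2 := by
    nlinarith [Real.sq_sqrt (show (0:ℝ) ≤ 2 by norm_num)]
  have hB1 : (1:ℝ) ≤ Real.exp 14 := Real.one_le_exp (by norm_num)
  intro m
  induction m with
  | zero => intro _; simp
  | succ m ih =>
    intro hm
    have hm' : (m : ℝ) * Real.sqrt δ ≤ 2 := by push_cast at hm ⊢; nlinarith
    have IH := ih hm'
    have hB := pow_bound h0 h1 m hm'
    have hG := geom_bound h0 h1 m hm'
    have hB0 : (1:ℝ) ≤ Aa δ ^ m := one_le_pow₀ hA1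
    have key : Aa δ ^ (m+1) - 1 - 2*Real.sqrt 2*((m:ℕ)+1 : ℕ)*Real.sqrt δ
        = (Aa δ ^ m - 1 - 2*Real.sqrt 2*(m:ℝ)*Real.sqrt δ)
          + (Aa δ ^ m * (Aa δ - 1 - 2*Real.sqrt 2*Real.sqrt δ)
             + (Aa δ ^ m - 1) * (2*Real.sqrt 2*Real.sqrt δ)) := by push_cast; ring
    have t1 : |Aa δ ^ m * (Aa δ - 1 - 2*Real.sqrt 2*Real.sqrt δ)| ≤ Real.exp 14 * (6*δ) := by
      rw [abs_mul, abs_of_nonneg (by linarith : (0:ℝ) ≤ Aa δ ^ m)]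
      exact mul_le_mul hB h6 (abs_nonneg _) (Real.exp_pos 14).le
    have t2 : |(Aa δ ^ m - 1) * (2*Real.sqrt 2*Real.sqrt δ)|
        ≤ 21 * (m:ℝ) * δ * Real.exp 14 := by
      rw [abs_mul, abs_of_nonneg (by linarith : (0:ℝ) ≤ Aa δ ^ m - 1),
        abs_of_nonneg (by positivity)]
      have h2 : (7*Real.sqrt δ*(m:ℝ)*Real.exp 14) * (3*Real.sqrt δ)
          = 21*(m:ℝ)*δ*Real.exp 14 := by linear_combination (21*(m:ℝ)*Real.exp 14) * hs2
      calc (Aa δ ^ m - 1) * (2*Real.sqrt 2*Real.sqrt δ)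
          ≤ (7*Real.sqrt δ*(m:ℝ)*Real.exp 14) * (3*Real.sqrt δ) := by
            apply mul_le_mul hG (by nlinarith) (by positivity) (by positivity)
        _ = 21*(m:ℝ)*δ*Real.exp 14 := h2
    have tri : |Aa δ ^ (m+1) - 1 - 2*Real.sqrt 2*((m:ℕ)+1 : ℕ)*Real.sqrt δ|
        ≤ |Aa δ ^ m - 1 - 2*Real.sqrt 2*(m:ℝ)*Real.sqrt δ|
          + (|Aa δ ^ m * (Aa δ - 1 - 2*Real.sqrt 2*Real.sqrt δ)|
             + |(Aa δ ^ m - 1) * (2*Real.sqrt 2*Real.sqrt δ)|) := by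
      rw [key]
      exact (abs_add_le _ _).trans (add_le_add le_rfl (abs_add_le _ _))
    have hmB : (0:ℝ) ≤ (m:ℝ) * (Real.exp 14 * δ) :=
      mul_nonneg (Nat.cast_nonneg m) (mul_nonneg (Real.exp_pos 14).le h0.le)
    have hBd : (0:ℝ) ≤ Real.exp 14 * δ := mul_nonneg (Real.exp_pos 14).le h0.le
    push_cast at tri ⊢
    nlinarith [tri, IH, t1, t2]

theorem stmt_5 :
    ∃ C > (0:ℝ), ∃ δ₀ ∈ Set.Ioo (0:ℝ) 1, ∀ δ ∈ Set.Ioo (0:ℝ) δ₀,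
      (∀ n : ℕ, n ≤ ⌊δ ^ (-(1:ℝ)/2)⌋₊ →
        |((1 + δ + Real.sqrt (δ ^ 2 + 2 * δ)) /
            (1 + δ - Real.sqrt (δ ^ 2 + 2 * δ))) ^ (n + 1)
          - 1 - 2 * Real.sqrt 2 * ((n : ℝ) + 1) * Real.sqrt δ|
          ≤ C * ((n : ℝ) + 1) ^ 2 * δ) ∧
      |(1 + δ + Real.sqrt (δ ^ 2 + 2 * δ)) / (1 + δ - Real.sqrt (δ ^ 2 + 2 * δ))
        - 1 - 2 * Real.sqrt 2 * Real.sqrt δ - 4 * δ| ≤ C * δ ^ ((3:ℝ)/2) := by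
  refine ⟨21 * Real.exp 14, by positivity, 1/16, ⟨by norm_num, by norm_num⟩, ?_⟩
  rintro δ ⟨h0, h1⟩
  have hs0 : 0 < Real.sqrt δ := Real.sqrt_pos.mpr h0
  have hs2 : (Real.sqrt δ) ^ 2 = δ := Real.sq_sqrt h0.le
  have hs4 : Real.sqrt δ ≤ 1/4 := by
    rw [show (1/4 : ℝ) = Real.sqrt ((1/4)^2) by rw [Real.sqrt_sq]; norm_num]
    exact Real.sqrt_le_sqrt (by nlinarith)
  have hB1 : (1:ℝ) ≤ Real.exp 14 := Real.one_le_exp (by norm_num)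
  constructor
  · intro n hn
    have hxpos : (0:ℝ) < δ ^ (-(1:ℝ)/2) := Real.rpow_pos_of_pos h0 _
    have hx : ((n:ℕ):ℝ) ≤ δ ^ (-(1:ℝ)/2) := (Nat.le_floor_iff hxpos.le).mp hn
    have hxv : δ ^ (-(1:ℝ)/2) = (Real.sqrt δ)⁻¹ := by
      rw [show (-(1:ℝ)/2) = -(1/2 : ℝ) by norm_num, Real.rpow_neg h0.le,
        ← Real.sqrt_eq_rpow]
    have hns : (n:ℝ) * Real.sqrt δ ≤ 1 := by
      rw [hxv] at hx
      have := mul_le_mul_of_nonneg_right hx hs0.le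
      rwa [inv_mul_cancel₀ hs0.ne'] at this
    have hm : ((n+1 : ℕ):ℝ) * Real.sqrt δ ≤ 2 := by push_cast; nlinarith
    have H := main_bound h0 h1 (n+1) hm
    unfold Aa at H
    push_cast at H
    convert H using 2
  · obtain ⟨-, -, -, h7⟩ := facts h0 h1
    have h32 : δ ^ ((3:ℝ)/2) = (Real.sqrt δ) ^ 3 := by
      rw [show ((3:ℝ)/2) = (1/2 : ℝ) * ((3:ℕ):ℝ) by norm_num, Real.rpow_mul h0.le,
        Real.rpow_natCast, ← Real.sqrt_eq_rpow]
    unfold Aa at h7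
    rw [h32]
    have hcube : (0:ℝ) ≤ (Real.sqrt δ) ^ 3 := by positivity
    nlinarith [h7]
end

section
/- Let δ > 0 and define (p_n) by p₀ = 1+δ, p_{n+1} = 1+δ − 1/(1+δ+p_n); set N := ⌊δ^{−1/2}⌋. There exist constants C > 0 and δ₀ ∈ (0,1) such that for all δ ∈ (0,δ₀) and all integers n with 0 ≤ n ≤ N one has |p_n − 1/(n+1)| ≤ C·√δ. -/
open Real

/-!
For `δ = 0` the recursion is `p ↦ p / (1 + p)`, whose orbit from `1` is `1 / (n + 1)`; in
general `p_{n+1} = δ + g (p_n + δ)` with `g x = x / (1 + x)`. Since `g` is increasing and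
`1`-Lipschitz on `[0, ∞)`, the error `p_n - 1 / (n + 1)` stays nonnegative and grows by at most
`2δ` per step, so it is at most `(2n + 1) δ ≤ 3 √δ` as long as `n ≤ δ^{-1/2}`.
-/

lemma div_one_add_sub_div_one_add_mem_Icc {a b : ℝ} (hb : 0 ≤ b) (hba : b ≤ a) :
    a / (1 + a) - b / (1 + b) ∈ Set.Icc 0 (a - b) := by
  have hdiff : a / (1 + a) - b / (1 + b) = (a - b) / ((1 + a) * (1 + b)) := by
    have : 1 + a ≠ 0 := by linarith
    have : 1 + b ≠ 0 := by linarith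
    field_simp
    ring
  have hden : 1 ≤ (1 + a) * (1 + b) := by nlinarith
  rw [hdiff]
  exact ⟨div_nonneg (by linarith) (by linarith),
    div_le_self (by linarith) hden⟩

lemma one_div_succ_div_one_add (k : ℕ) :
    1 / ((k : ℝ) + 1) / (1 + 1 / ((k : ℝ) + 1)) = 1 / (((k + 1 : ℕ) : ℝ) + 1) := by
  push_cast
  field_simp

lemma one_add_sub_one_div_eq {δ x : ℝ} (h : 1 + δ + x ≠ 0) :
    1 + δ - 1 / (1 + δ + x) = δ + (x + δ) / (1 + (x + δ)) := by
  rw [show 1 + (x + δ) = 1 + δ + x by ring]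
  field_simp
  ring

lemma sub_one_div_succ_mem_Icc {δ : ℝ} (hδ : 0 ≤ δ) {p : ℕ → ℝ} (hp0 : p 0 = 1 + δ)
    (hrec : ∀ n, p (n + 1) = 1 + δ - 1 / (1 + δ + p n)) (n : ℕ) :
    p n - 1 / ((n : ℝ) + 1) ∈ Set.Icc 0 ((2 * n + 1) * δ) := by
  induction n with
  | zero => simp [hp0, hδ]
  | succ k ih =>
    obtain ⟨hlow, hup⟩ := ih
    have hk : (0 : ℝ) ≤ 1 / ((k : ℝ) + 1) := by positivity
    obtain ⟨hg_low, hg_up⟩ := div_one_add_sub_div_one_add_mem_Icc hk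
      (show 1 / ((k : ℝ) + 1) ≤ p k + δ by linarith)
    have hstep : p (k + 1) - 1 / (((k + 1 : ℕ) : ℝ) + 1)
        = δ + ((p k + δ) / (1 + (p k + δ)) - 1 / ((k : ℝ) + 1) / (1 + 1 / ((k : ℝ) + 1))) := by
      rw [hrec, one_add_sub_one_div_eq (by linarith), one_div_succ_div_one_add]
      ring
    rw [hstep]
    push_cast
    constructor <;> linarith

lemma natCast_mul_le_sqrt_of_le_floor {δ : ℝ} (hδ : 0 < δ) {n : ℕ}
    (hn : n ≤ ⌊δ ^ (-(1:ℝ)/2)⌋₊) : (n : ℝ) * δ ≤ √δ := by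
  have hrpow : δ ^ (-(1:ℝ)/2) = (√δ)⁻¹ := by
    rw [neg_div, rpow_neg hδ.le, ← sqrt_eq_rpow]
  have hn' : (n : ℝ) ≤ (√δ)⁻¹ :=
    hrpow ▸ (Nat.cast_le.2 hn).trans (Nat.floor_le (by positivity))
  calc (n : ℝ) * δ ≤ (√δ)⁻¹ * δ := mul_le_mul_of_nonneg_right hn' hδ.le
    _ = √δ := by rw [inv_mul_eq_div, div_sqrt]

theorem stmt_6 :
    ∃ C > (0:ℝ), ∃ δ₀ ∈ Set.Ioo (0:ℝ) 1, ∀ δ ∈ Set.Ioo (0:ℝ) δ₀,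
      ∀ p : ℕ → ℝ, p 0 = 1 + δ →
        (∀ n, p (n + 1) = 1 + δ - 1 / (1 + δ + p n)) →
        ∀ n : ℕ, n ≤ ⌊δ ^ (-(1:ℝ)/2)⌋₊ →
          |p n - 1 / ((n : ℝ) + 1)| ≤ C * Real.sqrt δ := by
  refine ⟨3, by norm_num, 1/2, by norm_num, ?_⟩
  rintro δ ⟨hδ0, hδ1⟩ p hp0 hrec n hn
  obtain ⟨hlow, hup⟩ := sub_one_div_succ_mem_Icc hδ0.le hp0 hrec n
  have hnδ := natCast_mul_le_sqrt_of_le_floor hδ0 hn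
  have hδ_le_sqrt : δ ≤ √δ := le_sqrt_self_iff.2 (by linarith)
  rw [abs_of_nonneg hlow]
  linarith
end

section
/- Let δ > 0 and define (p_n) by p₀ = 1+δ, p_{n+1} = 1+δ − 1/(1+δ+p_n); let ρ₀ := 1, ρ_m := 1/(1+δ+p_{m−1}) for m ≥ 1, q_n := ∏_{m=0}^n ρ_m, and N := ⌊δ^{−1/2}⌋. There exist constants C > 0 and δ₀ ∈ (0,1), independent of δ, such that for all δ ∈ (0,δ₀) the tail of the series satisfies Σ_{n=N}^∞ q_n ≤ C (in particular the series Σ_{n=0}^∞ q_n converges). -/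
/-!
Since `(1 + δ - √δ)(1 + δ + √δ) ≥ 1`, the recurrence keeps `p n ≥ √δ`, so every `ρ m` with `m ≥ 1`
is at most `1 / (1 + √δ)` and `q` decays geometrically with ratio `r = 1 / (1 + √δ)`. Independently,
`p n ≥ 1 / (n + 1)` gives `ρ (n + 1) ≤ (n + 1) / (n + 2)`, so the product telescopes to
`q n ≤ 1 / (n + 1)`; at `n = N` this is at most `√δ`. Hence the tail is at most
`q N / (1 - r) ≤ √δ (1 + √δ) / √δ = 1 + √δ < 2`.
-/

open Real Finset

section Recurrence

variable {c : ℝ} {p : ℕ → ℝ}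

lemma one_div_add_le_div_succ {x : ℝ} {n : ℕ} (hc : 1 ≤ c) (hx : 1 / ((n : ℝ) + 1) ≤ x) :
    1 / (c + x) ≤ ((n : ℝ) + 1) / (n + 2) := by
  have hn : (0 : ℝ) < n + 1 := by positivity
  have hnx : 1 ≤ ((n : ℝ) + 1) * x := by rwa [div_le_iff₀' hn] at hx
  have hx0 : 0 < x := lt_of_lt_of_le (by positivity) hx
  rw [div_le_div_iff₀ (by linarith) (by positivity)]
  nlinarith

lemma le_of_recurrence_of_sq_add_one_le {s : ℝ} (hs : 0 ≤ s) (hsc : s ^ 2 + 1 ≤ c ^ 2)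
    (hc : 0 < c) (h0 : s ≤ p 0) (hp : ∀ n, p (n + 1) = c - 1 / (c + p n)) (n : ℕ) : s ≤ p n := by
  induction n with
  | zero => exact h0
  | succ n ih =>
    have hcs : 0 < c + s := by linarith
    have hstep : 1 / (c + s) ≤ c - s := by
      rw [div_le_iff₀ hcs]
      nlinarith
    rw [hp n]
    linarith [one_div_le_one_div_of_le hcs (by linarith : c + s ≤ c + p n)]

lemma inv_succ_le_of_recurrence (hc : 1 ≤ c) (h0 : 1 ≤ p 0)
    (hp : ∀ n, p (n + 1) = c - 1 / (c + p n)) (n : ℕ) : 1 / ((n : ℝ) + 1) ≤ p n := by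
  induction n with
  | zero => simpa using h0
  | succ n ih =>
    have hstep := one_div_add_le_div_succ hc ih
    have hn : (1 : ℝ) / ((n + 1 : ℕ) + 1) = 1 - ((n : ℝ) + 1) / (n + 2) := by
      push_cast
      field_simp
      ring
    rw [hp n, hn]
    linarith

end Recurrence

section Products

variable {ρ : ℕ → ℝ}

lemma prod_range_le_one_div_succ (hρ : ∀ m, 0 ≤ ρ m) (hρ0 : ρ 0 ≤ 1)
    (hρ_succ : ∀ n : ℕ, ρ (n + 1) ≤ ((n : ℝ) + 1) / (n + 2)) (n : ℕ) :
    ∏ m ∈ range (n + 1), ρ m ≤ 1 / ((n : ℝ) + 1) := by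
  induction n with
  | zero => simpa using hρ0
  | succ n ih =>
    have htelescope : 1 / ((n : ℝ) + 1) * (((n : ℝ) + 1) / (n + 2)) = 1 / ((n + 1 : ℕ) + 1) := by
      push_cast
      field_simp
      ring
    rw [prod_range_succ, ← htelescope]
    exact mul_le_mul ih (hρ_succ n) (hρ _) (by positivity)

lemma prod_range_add_le_mul_pow {r : ℝ} (hρ : ∀ m, 0 ≤ ρ m) (hρr : ∀ m, 1 ≤ m → ρ m ≤ r)
    (n k : ℕ) :
    ∏ m ∈ range (n + k + 1), ρ m ≤ (∏ m ∈ range (n + 1), ρ m) * r ^ k := by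
  rw [show n + k + 1 = n + 1 + k by omega, prod_range_add]
  gcongr
  · exact prod_nonneg fun m _ => hρ m
  · calc ∏ x ∈ range k, ρ (n + 1 + x) ≤ ∏ _x ∈ range k, r :=
          prod_le_prod (fun x _ => hρ _) fun x _ => hρr _ (by omega)
      _ = r ^ k := by rw [prod_const, card_range]

end Products

section GeometricTail

variable {q : ℕ → ℝ} {r : ℝ} {N : ℕ}

lemma summable_nat_add_of_le_mul_pow (hq : ∀ n, 0 ≤ q n) (hr0 : 0 ≤ r) (hr1 : r < 1)
    (h : ∀ k, q (N + k) ≤ q N * r ^ k) : Summable fun k => q (N + k) :=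
  ((summable_geometric_of_lt_one hr0 hr1).mul_left (q N)).of_nonneg_of_le (fun _ => hq _) h

lemma tsum_nat_add_le_div_one_sub (hq : ∀ n, 0 ≤ q n) (hr0 : 0 ≤ r) (hr1 : r < 1)
    (h : ∀ k, q (N + k) ≤ q N * r ^ k) : ∑' k, q (N + k) ≤ q N / (1 - r) := by
  calc ∑' k, q (N + k) ≤ ∑' k, q N * r ^ k :=
        (summable_nat_add_of_le_mul_pow hq hr0 hr1 h).tsum_le_tsum h
          ((summable_geometric_of_lt_one hr0 hr1).mul_left _)
    _ = q N / (1 - r) := by rw [tsum_mul_left, tsum_geometric_of_lt_one hr0 hr1, div_eq_mul_inv]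

end GeometricTail

lemma one_div_floor_rpow_neg_half_add_one_le_sqrt {δ : ℝ} (hδ : 0 < δ) :
    1 / ((⌊δ ^ (-(1 : ℝ) / 2)⌋₊ : ℝ) + 1) ≤ √δ := by
  have hrpow : δ ^ (-(1 : ℝ) / 2) = (√δ)⁻¹ := by
    rw [sqrt_eq_rpow, ← rpow_neg hδ.le]
    norm_num
  have hlt := Nat.lt_floor_add_one (δ ^ (-(1 : ℝ) / 2))
  rw [hrpow] at hlt ⊢
  rw [div_le_iff₀ (by positivity)]
  have hsqrt : 0 < √δ := sqrt_pos.2 hδ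
  calc (1 : ℝ) = √δ * (√δ)⁻¹ := (mul_inv_cancel₀ hsqrt.ne').symm
    _ ≤ √δ * _ := mul_le_mul_of_nonneg_left hlt.le hsqrt.le

theorem stmt_9 :
    ∃ C > (0:ℝ), ∃ δ₀ ∈ Set.Ioo (0:ℝ) 1, ∀ δ ∈ Set.Ioo (0:ℝ) δ₀,
      ∀ p ρ q : ℕ → ℝ,
        p 0 = 1 + δ →
        (∀ n, p (n + 1) = 1 + δ - 1 / (1 + δ + p n)) →
        ρ 0 = 1 →
        (∀ m, 1 ≤ m → ρ m = 1 / (1 + δ + p (m - 1))) →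
        (∀ n, q n = ∏ m ∈ Finset.range (n + 1), ρ m) →
        Summable q ∧ ∑' k : ℕ, q (⌊δ ^ (-(1:ℝ)/2)⌋₊ + k) ≤ C := by
  refine ⟨2, two_pos, 1 / 2, ⟨by norm_num, by norm_num⟩, ?_⟩
  rintro δ ⟨hδ, hδ_half⟩ p ρ q hp0 hp hρ0 hρ hq
  obtain rfl : q = fun n => ∏ m ∈ range (n + 1), ρ m := funext hq
  set t := √δ
  have ht : 0 < t := sqrt_pos.2 hδ
  have ht1 : t < 1 := (sqrt_lt' one_pos).2 (by linarith)
  have hρ_succ (n : ℕ) : ρ (n + 1) = 1 / (1 + δ + p n) := hρ (n + 1) n.succ_pos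
  have hp_inv := inv_succ_le_of_recurrence (by linarith) (by linarith) hp
  have hp_t := le_of_recurrence_of_sq_add_one_le ht.le (by nlinarith [sq_sqrt hδ.le])
    (by linarith) (by linarith) hp
  have hρ_nonneg : ∀ m, 0 ≤ ρ m
    | 0 => by simp [hρ0]
    | n + 1 => by rw [hρ_succ]; exact div_nonneg zero_le_one (by linarith [hp_t n])
  have hρ_ratio : ∀ m, 1 ≤ m → ρ m ≤ 1 / (1 + t)
    | n + 1, _ => by
      rw [hρ_succ]
      exact one_div_le_one_div_of_le (by positivity) (by linarith [hp_t n])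
  set N := ⌊δ ^ (-(1:ℝ)/2)⌋₊
  have hgeo (n k : ℕ) := prod_range_add_le_mul_pow hρ_nonneg hρ_ratio n k
  have hq_nonneg (n : ℕ) : 0 ≤ ∏ m ∈ range (n + 1), ρ m := prod_nonneg fun m _ => hρ_nonneg m
  have hr1 : 1 / (1 + t) < 1 := by rw [div_lt_one (by positivity)]; linarith
  have hqN : ∏ m ∈ range (N + 1), ρ m ≤ t :=
    (prod_range_le_one_div_succ hρ_nonneg hρ0.le
      (fun n => hρ_succ n ▸ one_div_add_le_div_succ (by linarith) (hp_inv n)) N).trans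
      (one_div_floor_rpow_neg_half_add_one_le_sqrt hδ)
  refine ⟨by simpa using summable_nat_add_of_le_mul_pow hq_nonneg (by positivity) hr1 (hgeo 0), ?_⟩
  calc _ ≤ (∏ m ∈ range (N + 1), ρ m) / (1 - 1 / (1 + t)) :=
        tsum_nat_add_le_div_one_sub hq_nonneg (by positivity) hr1 (hgeo N)
    _ ≤ t / (1 - 1 / (1 + t)) := by gcongr
    _ = 1 + t := by
      rw [one_sub_div (by positivity), add_sub_cancel_left, div_div_eq_mul_div,
        mul_div_cancel_left₀ _ ht.ne']
    _ ≤ 2 := by linarith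
end

section
/- Let δ > 0 and define (p_n) by p₀ = 1+δ, p_{n+1} = 1+δ − 1/(1+δ+p_n); let ρ₀ := 1, ρ_m := 1/(1+δ+p_{m−1}) for m ≥ 1, q_n := ∏_{m=0}^n ρ_m, and Q := Σ_{n=0}^∞ q_n. There exist constants C > 0 and δ₀ ∈ (0,1) such that for all δ ∈ (0,δ₀) one has |Q − (1/2)·ln(1/δ)| ≤ C; that is, Q = |log √δ| + O(1) as δ → 0⁺. -/
/-!
Let `r ∈ (0, 1)` solve `r + r⁻¹ = 2 (1 + δ)`. The recursion is solved by
`1 + δ + p n = U (n + 1) / U n` with `U n = r⁻ⁿ (1 + r² + ⋯ + r²ⁿ)`, the Chebyshev polynomial of the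
second kind evaluated at `1 + δ`, so the product telescopes to `q n = 1 / U n`.
Since `rⁿ / (n + 1) ≤ 1 / U n ≤ 1 / (n + 1)`, the terms with `n < 1 / (1 - r)` add up to a harmonic
number `log (1 / (1 - r)) + O(1)`; beyond that cutoff `1 / U n ≤ 2 (1 - r²) rⁿ`, a geometric tail of
size `O(1)`. Finally `(1 - r)² = 2 δ r`, so `log (1 / (1 - r)) = ½ log (1 / δ) + O(1)`.
-/

open Real Finset

noncomputable def evenPowSum (r : ℝ) (n : ℕ) : ℝ := ∑ j ∈ range (n + 1), (r ^ 2) ^ j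

/-- `1 / U n` for the Chebyshev polynomial `U n` of the second kind at `(r + r⁻¹) / 2`. -/
noncomputable def chebRecip (r : ℝ) (n : ℕ) : ℝ := r ^ n / evenPowSum r n

section evenPowSum

variable (r : ℝ) (n : ℕ)

lemma one_le_evenPowSum : 1 ≤ evenPowSum r n := by
  rw [evenPowSum, sum_range_succ']
  simpa using sum_nonneg fun j _ => pow_nonneg (sq_nonneg r) (j + 1)

lemma evenPowSum_pos : 0 < evenPowSum r n := one_pos.trans_le (one_le_evenPowSum r n)

lemma evenPowSum_zero : evenPowSum r 0 = 1 := by simp [evenPowSum]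

lemma evenPowSum_one : evenPowSum r 1 = 1 + r ^ 2 := by simp [evenPowSum, sum_range_succ]

lemma evenPowSum_add_two :
    evenPowSum r (n + 2) = (1 + r ^ 2) * evenPowSum r (n + 1) - r ^ 2 * evenPowSum r n := by
  simp only [evenPowSum, sum_range_succ _ (n + 2), sum_range_succ _ (n + 1)]
  ring

lemma evenPowSum_mul_one_sub_sq : evenPowSum r n * (1 - r ^ 2) = 1 - (r ^ 2) ^ (n + 1) :=
  geom_sum_mul_neg _ _

lemma evenPowSum_le (h₀ : 0 ≤ r) (h₁ : r ≤ 1) : evenPowSum r n ≤ n + 1 := by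
  have : ∀ j ∈ range (n + 1), (r ^ 2) ^ j ≤ 1 := fun j _ => pow_le_one₀ (by positivity)
    (pow_le_one₀ h₀ h₁)
  simpa [evenPowSum] using sum_le_card_nsmul _ _ 1 this

-- Pair the terms `j` and `n - j` and use AM-GM.
lemma succ_mul_pow_le_evenPowSum : (n + 1) * r ^ n ≤ evenPowSum r n := by
  have hpair : ∀ j ∈ range (n + 1), 2 * r ^ n ≤ (r ^ 2) ^ j + (r ^ 2) ^ (n - j) := by
    intro j hj
    obtain ⟨k, rfl⟩ := Nat.exists_eq_add_of_le (Nat.lt_succ_iff.mp (mem_range.mp hj))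
    calc 2 * r ^ (j + k) = 2 * r ^ j * r ^ k := by ring
      _ ≤ (r ^ j) ^ 2 + (r ^ k) ^ 2 := two_mul_le_add_sq _ _
      _ = (r ^ 2) ^ j + (r ^ 2) ^ (j + k - j) := by rw [Nat.add_sub_cancel_left]; ring
  have hrefl := sum_range_reflect (fun j => (r ^ 2) ^ j) (n + 1)
  simp only [Nat.add_sub_cancel] at hrefl
  have hsum := sum_le_sum hpair
  rw [sum_add_distrib, hrefl] at hsum
  simp only [sum_const, card_range, nsmul_eq_mul] at hsum
  unfold evenPowSum
  push_cast at hsum ⊢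
  linarith

end evenPowSum

section chebRecip

variable {r : ℝ}

lemma chebRecip_nonneg (h₀ : 0 ≤ r) (n : ℕ) : 0 ≤ chebRecip r n :=
  div_nonneg (pow_nonneg h₀ n) (evenPowSum_pos r n).le

lemma chebRecip_le_pow (h₀ : 0 ≤ r) (n : ℕ) : chebRecip r n ≤ r ^ n :=
  div_le_self (pow_nonneg h₀ n) (one_le_evenPowSum r n)

lemma chebRecip_le_inv_succ (n : ℕ) : chebRecip r n ≤ 1 / (n + 1) := by
  rw [chebRecip, div_le_div_iff₀ (evenPowSum_pos r n) (by positivity), one_mul, mul_comm]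
  exact succ_mul_pow_le_evenPowSum r n

lemma inv_succ_sub_le_chebRecip (h₀ : 0 ≤ r) (h₁ : r ≤ 1) (n : ℕ) :
    1 / (n + 1) - (1 - r) ≤ chebRecip r n := by
  have hbern : 1 - n * (1 - r) ≤ r ^ n := by
    linear_combination one_add_mul_sub_le_pow (by linarith : (-1 : ℝ) ≤ r) n
  calc 1 / (n + 1) - (1 - r) ≤ (1 - n * (1 - r)) / (n + 1) := by
        rw [sub_div]
        gcongr
        rw [div_le_iff₀ (by positivity)]
        nlinarith
    _ ≤ r ^ n / (n + 1) := by gcongr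
    _ ≤ chebRecip r n := div_le_div_of_nonneg_left (pow_nonneg h₀ n) (evenPowSum_pos r n)
        (evenPowSum_le r n h₀ h₁)

lemma chebRecip_le_of_sq_pow_le (h₀ : 0 ≤ r) (h₁ : r < 1) {n : ℕ} (hn : (r ^ 2) ^ (n + 1) ≤ 1 / 2) :
    chebRecip r n ≤ 2 * (1 - r ^ 2) * r ^ n := by
  have hS := evenPowSum_mul_one_sub_sq r n
  have hr2 : 0 < 1 - r ^ 2 := by nlinarith
  rw [chebRecip, div_le_iff₀ (evenPowSum_pos r n)]
  nlinarith [pow_nonneg h₀ n]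

lemma summable_chebRecip (h₀ : 0 ≤ r) (h₁ : r < 1) : Summable (chebRecip r) :=
  (summable_geometric_of_lt_one h₀ h₁).of_nonneg_of_le (chebRecip_nonneg h₀) (chebRecip_le_pow h₀)

lemma tsum_chebRecip_nat_add_le (h₀ : 0 ≤ r) (h₁ : r < 1) {N : ℕ} (hN : r ^ (N + 1) ≤ 1 / 2) :
    ∑' n, chebRecip r (n + N) ≤ 4 := by
  have hterm (n : ℕ) : chebRecip r (n + N) ≤ 2 * (1 - r ^ 2) * r ^ n := by
    have hpow : r ^ (n + N + 1) ≤ 1 / 2 :=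
      (pow_le_pow_of_le_one h₀ h₁.le (by omega)).trans hN
    have hsq : (r ^ 2) ^ (n + N + 1) ≤ 1 / 2 := by
      rw [← pow_mul, mul_comm, pow_mul]
      nlinarith [pow_nonneg h₀ (n + N + 1)]
    calc chebRecip r (n + N) ≤ 2 * (1 - r ^ 2) * r ^ (n + N) := chebRecip_le_of_sq_pow_le h₀ h₁ hsq
      _ ≤ 2 * (1 - r ^ 2) * r ^ n :=
        mul_le_mul_of_nonneg_left (pow_le_pow_of_le_one h₀ h₁.le (Nat.le_add_right n N))
          (by nlinarith)
  have hgeom := (summable_geometric_of_lt_one h₀ h₁).mul_left (2 * (1 - r ^ 2))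
  calc ∑' n, chebRecip r (n + N) ≤ ∑' n, 2 * (1 - r ^ 2) * r ^ n :=
        ((summable_nat_add_iff N).mpr (summable_chebRecip h₀ h₁)).tsum_le_tsum hterm hgeom
    _ = 2 * (1 + r) := by
        rw [tsum_mul_left, tsum_geometric_of_lt_one h₀ h₁]
        field_simp [(sub_pos.mpr h₁).ne']
        ring
    _ ≤ 4 := by linarith

lemma cast_harmonic_eq_sum (N : ℕ) : (harmonic N : ℝ) = ∑ n ∈ range N, 1 / ((n : ℝ) + 1) := by
  simp [harmonic]

lemma abs_tsum_chebRecip_add_log_le (h₀ : 0 ≤ r) (h₁ : r < 1) :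
    |∑' n, chebRecip r n + log (1 - r)| ≤ 5 := by
  have ha : 0 < 1 - r := sub_pos.mpr h₁
  set y := (1 - r)⁻¹
  have hy1 : 1 ≤ y := one_le_inv₀ ha |>.mpr (by linarith)
  have hlogy : log y = -log (1 - r) := log_inv _
  set N := ⌊y⌋₊
  have hNa : N * (1 - r) ≤ 1 := by
    rw [← le_div_iff₀ ha, one_div]; exact Nat.floor_le (by linarith)
  have hNa' : 1 ≤ (N + 1) * (1 - r) := by
    rw [← div_le_iff₀ ha, one_div]; exact (Nat.lt_floor_add_one y).le
  have hrN : r ^ (N + 1) ≤ 1 / 2 := calc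
    r ^ (N + 1) = (1 - (1 - r)) ^ (N + 1) := by ring
    _ ≤ exp (-(1 - r)) ^ (N + 1) := by
      gcongr
      · linarith
      · exact one_sub_le_exp_neg _
    _ = exp (-((N + 1) * (1 - r))) := by rw [← exp_nat_mul]; push_cast; ring_nf
    _ ≤ exp (-1) := by gcongr
    _ ≤ 1 / 2 := exp_neg_one_lt_half.le
  have hhead_le : ∑ n ∈ range N, chebRecip r n ≤ harmonic N := by
    rw [cast_harmonic_eq_sum]
    exact sum_le_sum fun n _ => chebRecip_le_inv_succ n
  have hhead_ge : (harmonic N : ℝ) - 1 ≤ ∑ n ∈ range N, chebRecip r n := calc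
    (harmonic N : ℝ) - 1 ≤ ∑ n ∈ range N, (1 / ((n : ℝ) + 1) - (1 - r)) := by
      rw [sum_sub_distrib, cast_harmonic_eq_sum, sum_const, card_range, nsmul_eq_mul]
      linarith
    _ ≤ ∑ n ∈ range N, chebRecip r n :=
      sum_le_sum fun n _ => inv_succ_sub_le_chebRecip h₀ h₁.le n
  have htail_nonneg : 0 ≤ ∑' n, chebRecip r (n + N) :=
    tsum_nonneg fun n => chebRecip_nonneg h₀ _
  have htail_le := tsum_chebRecip_nat_add_le h₀ h₁ hrN
  have hH_ge := log_le_harmonic_floor y (by linarith)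
  have hH_le := harmonic_floor_le_one_add_log y hy1
  rw [← (summable_chebRecip h₀ h₁).sum_add_tsum_nat_add N, abs_le]
  constructor <;> linarith

end chebRecip

section recurrence

variable {r c : ℝ} {p ρ : ℕ → ℝ}

lemma add_eq_evenPowSum_div (hr : r ≠ 0) (hc : r + r⁻¹ = 2 * c) (h0 : p 0 = c)
    (hs : ∀ n, p (n + 1) = c - 1 / (c + p n)) (n : ℕ) :
    c + p n = evenPowSum r (n + 1) / (r * evenPowSum r n) := by
  have hc' : r ^ 2 + 1 = 2 * c * r := by
    field_simp at hc
    linear_combination hc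
  induction n with
  | zero =>
    rw [h0, evenPowSum_one, evenPowSum_zero]
    field_simp
    linear_combination -hc'
  | succ n ih =>
    have hS := (evenPowSum_pos r n).ne'
    have hS' := (evenPowSum_pos r (n + 1)).ne'
    rw [hs, ih, one_div_div, evenPowSum_add_two]
    field_simp
    linear_combination -evenPowSum r (n + 1) * hc'

lemma prod_eq_chebRecip (hr : r ≠ 0) (hc : r + r⁻¹ = 2 * c) (h0 : p 0 = c)
    (hs : ∀ n, p (n + 1) = c - 1 / (c + p n)) (hρ0 : ρ 0 = 1)
    (hρ : ∀ m, 1 ≤ m → ρ m = 1 / (c + p (m - 1))) (n : ℕ) :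
    ∏ m ∈ range (n + 1), ρ m = chebRecip r n := by
  induction n with
  | zero => simp [hρ0, chebRecip, evenPowSum_zero]
  | succ n ih =>
    have hS := (evenPowSum_pos r n).ne'
    rw [prod_range_succ, ih, hρ (n + 1) (by omega), Nat.add_sub_cancel,
      add_eq_evenPowSum_div hr hc h0 hs, chebRecip, chebRecip, pow_succ]
    field_simp

end recurrence

lemma exists_add_inv_eq_two_mul {c : ℝ} (hc : 1 < c) : ∃ r, 0 < r ∧ r < 1 ∧ r + r⁻¹ = 2 * c := by
  have hd : 0 ≤ c ^ 2 - 1 := by nlinarith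
  have hsq := sq_sqrt hd
  have hlt : √(c ^ 2 - 1) < c := (sqrt_lt' (by linarith)).mpr (by linarith)
  have hgt : c - 1 < √(c ^ 2 - 1) := (lt_sqrt (by linarith)).mpr (by nlinarith)
  have hinv : (c - √(c ^ 2 - 1))⁻¹ = c + √(c ^ 2 - 1) := by
    rw [inv_eq_iff_eq_inv, eq_comm]
    apply inv_eq_of_mul_eq_one_right
    linear_combination -hsq
  exact ⟨c - √(c ^ 2 - 1), by linarith, by linarith, by rw [hinv]; ring⟩

lemma abs_log_one_sub_sub_half_log_le {r δ : ℝ} (h₀ : 0 < r) (h₁ : r < 1)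
    (hr : r + r⁻¹ = 2 * (1 + δ)) (hδ : δ ≤ 1 / 8) : |log (1 - r) - log δ / 2| ≤ 1 := by
  have hsq : (1 - r) ^ 2 = 2 * δ * r := by
    field_simp at hr
    linear_combination hr
  have hδ₀ : 0 < δ := by nlinarith
  have hr_half : 1 / 2 ≤ r := by nlinarith
  have hlog : log ((1 - r) ^ 2) = 2 * log (1 - r) := by simp [log_pow]
  have hlow : log δ ≤ log ((1 - r) ^ 2) := log_le_log hδ₀ (by nlinarith)
  have hup : log ((1 - r) ^ 2) ≤ log 2 + log δ := by
    rw [← log_mul two_ne_zero hδ₀.ne']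
    exact log_le_log (by nlinarith) (by nlinarith)
  rw [abs_le]
  constructor <;> linarith [log_two_lt_d9]

theorem stmt_10 :
    ∃ C > (0:ℝ), ∃ δ₀ ∈ Set.Ioo (0:ℝ) 1, ∀ δ ∈ Set.Ioo (0:ℝ) δ₀,
      ∀ p ρ q : ℕ → ℝ,
        p 0 = 1 + δ →
        (∀ n, p (n + 1) = 1 + δ - 1 / (1 + δ + p n)) →
        ρ 0 = 1 →
        (∀ m, 1 ≤ m → ρ m = 1 / (1 + δ + p (m - 1))) →
        (∀ n, q n = ∏ m ∈ Finset.range (n + 1), ρ m) →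
        Summable q ∧ |(∑' n, q n) - (1/2) * Real.log (1/δ)| ≤ C := by
  refine ⟨6, by norm_num, 1 / 8, by norm_num, ?_⟩
  rintro δ ⟨hδ, hδ₀⟩ p ρ q hp0 hp hρ0 hρ hq
  obtain ⟨r, hr₀, hr₁, hr⟩ := exists_add_inv_eq_two_mul (by linarith : 1 < 1 + δ)
  obtain rfl : q = chebRecip r :=
    funext fun n => (hq n).trans (prod_eq_chebRecip hr₀.ne' hr hp0 hp hρ0 hρ n)
  refine ⟨summable_chebRecip hr₀.le hr₁, ?_⟩
  have hQ := abs_le.mp (abs_tsum_chebRecip_add_log_le hr₀.le hr₁)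
  have hlog := abs_le.mp (abs_log_one_sub_sub_half_log_le hr₀ hr₁ hr hδ₀.le)
  rw [one_div δ, log_inv, abs_le]
  constructor <;> linarith [hQ.1, hQ.2, hlog.1, hlog.2]
end

section
/- Fix r* > 0 and α ≥ 1, and for ε ∈ (0,1) set r := r*·ε^α. Define (c_n) by c₀ = r+ε, c_{n+1} = r+ε − r²/(r+ε+c_n); let ρ₀ := 1, ρ_m := r/(c₀+c_{m−1}) for m ≥ 1, q_n := ∏_{m=0}^n ρ_m, and Q := Σ_{n=0}^∞ q_n. Then for every ε ∈ (0,1), 1 + r*ε^{α−1}/(2 + r*ε^{α−1}) ≤ Q ≤ 1 + (1/2)·r*·ε^{α−1} ≤ 1 + r*/2. In particular there exist constants C₁, C₂ > 0 depending only on r* such that C₁ ≤ Q ≤ C₂ for all ε ∈ (0,1) and all α ≥ 1. -/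
/-!
With `s = r + ε`, the map `c ↦ s - r² / (s + c)` has the positive fixed point
`t = √(s² - r²) ≥ ε` and maps `[t, s]` into itself, so every `c n` lies in `[t, s]`.
Hence `r / (2s) ≤ ρ m ≤ r / (s + t)` for `m ≥ 1`, and `Q = Σ q n` is squeezed between the
two geometric series with these ratios: `Q ≥ 2s / (2s - r) = 1 + (r/ε) / (2 + r/ε)` and
`Q ≤ (s + t) / (ε + t) = 1 + r / (ε + t) ≤ 1 + r / (2ε)`.
Finally `r / ε = r* ε^(α-1) ≤ r*` because `α ≥ 1` and `ε < 1`.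
-/

open Real Finset

section ContinuedFraction

variable {r s t : ℝ}

lemma sq_div_add_eq_sub (ht : t ^ 2 = s ^ 2 - r ^ 2) (hst : 0 < s + t) :
    r ^ 2 / (s + t) = s - t := by
  rw [div_eq_iff hst.ne']
  nlinarith

lemma mem_Icc_of_rec_sub_sq_div {c : ℕ → ℝ} (ht0 : 0 < t) (hts : t ≤ s)
    (ht : t ^ 2 = s ^ 2 - r ^ 2) (h0 : c 0 = s)
    (hrec : ∀ n, c (n + 1) = s - r ^ 2 / (s + c n)) (n : ℕ) : c n ∈ Set.Icc t s := by
  induction n with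
  | zero => exact h0.symm ▸ ⟨hts, le_rfl⟩
  | succ n ih =>
    have hle : r ^ 2 / (s + c n) ≤ s - t := by
      rw [← sq_div_add_eq_sub ht (by linarith)]
      exact div_le_div_of_nonneg_left (sq_nonneg r) (by linarith) (by linarith [ih.1])
    have hnonneg : 0 ≤ r ^ 2 / (s + c n) := div_nonneg (sq_nonneg r) (by linarith [ih.1])
    rw [hrec n]
    constructor <;> linarith

end ContinuedFraction

lemma pow_le_prod_range_and_prod_range_le_pow {ρ : ℕ → ℝ} {a b : ℝ} (hb : 0 ≤ b)
    (h : ∀ m, b ≤ ρ m ∧ ρ m ≤ a) (n : ℕ) :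
    b ^ n ≤ ∏ m ∈ range n, ρ m ∧ ∏ m ∈ range n, ρ m ≤ a ^ n := by
  have hρ0 : ∀ m ∈ range n, 0 ≤ ρ m := fun m _ => hb.trans (h m).1
  constructor
  · simpa using prod_le_prod (s := range n) (fun _ _ => hb) (fun m _ => (h m).1)
  · simpa using prod_le_prod hρ0 (fun m _ => (h m).2)

lemma inv_one_sub_le_tsum_and_tsum_le_inv_one_sub {q : ℕ → ℝ} {a b : ℝ} (hb : 0 ≤ b)
    (ha : a < 1) (h : ∀ n, b ^ n ≤ q n ∧ q n ≤ a ^ n) :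
    (1 - b)⁻¹ ≤ ∑' n, q n ∧ ∑' n, q n ≤ (1 - a)⁻¹ := by
  have hba : b ≤ a := by simpa using (h 1).1.trans (h 1).2
  have hsa : Summable (a ^ ·) := summable_geometric_of_lt_one (hb.trans hba) ha
  have hsb : Summable (b ^ ·) := summable_geometric_of_lt_one hb (hba.trans_lt ha)
  have hsq : Summable q :=
    hsa.of_nonneg_of_le (fun n => (pow_nonneg hb n).trans (h n).1) (fun n => (h n).2)
  rw [← tsum_geometric_of_lt_one hb (hba.trans_lt ha),
    ← tsum_geometric_of_lt_one (hb.trans hba) ha]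
  exact ⟨hsb.tsum_le_tsum (fun n => (h n).1) hsq, hsq.tsum_le_tsum (fun n => (h n).2) hsa⟩

theorem one_add_div_le_tsum_and_tsum_le_one_add_half_div {r ε : ℝ} (hr : 0 ≤ r) (hε : 0 < ε) {c ρ q : ℕ → ℝ}
    (hc0 : c 0 = r + ε) (hrec : ∀ n, c (n + 1) = r + ε - r ^ 2 / (r + ε + c n))
    (hρ0 : ρ 0 = 1) (hρ : ∀ m, 1 ≤ m → ρ m = r / (c 0 + c (m - 1)))
    (hq : ∀ n, q n = ∏ m ∈ range (n + 1), ρ m) :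
    1 + r / ε / (2 + r / ε) ≤ ∑' n, q n ∧ ∑' n, q n ≤ 1 + 1 / 2 * (r / ε) := by
  set s := r + ε
  set t := √(s ^ 2 - r ^ 2)
  have ht : t ^ 2 = s ^ 2 - r ^ 2 := sq_sqrt (by nlinarith)
  have hεt : ε ≤ t := (le_sqrt hε.le (by nlinarith)).2 (by nlinarith)
  have hts : t ≤ s := sqrt_le_iff.2 ⟨by positivity, by nlinarith⟩
  have hc := mem_Icc_of_rec_sub_sq_div (hε.trans_le hεt) hts ht hc0 hrec
  have hρ_bounds : ∀ m, r / (2 * s) ≤ ρ (m + 1) ∧ ρ (m + 1) ≤ r / (s + t) := fun m => by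
    rw [hρ (m + 1) m.succ_pos, Nat.add_sub_cancel, hc0]
    exact ⟨div_le_div_of_nonneg_left hr (by linarith [(hc m).1]) (by linarith [(hc m).2]),
      div_le_div_of_nonneg_left hr (by linarith) (by linarith [(hc m).1])⟩
  have hq_bounds : ∀ n, (r / (2 * s)) ^ n ≤ q n ∧ q n ≤ (r / (s + t)) ^ n := fun n => by
    rw [hq, prod_range_succ', hρ0, mul_one]
    exact pow_le_prod_range_and_prod_range_le_pow (by positivity) hρ_bounds n
  obtain ⟨hlow, hup⟩ := inv_one_sub_le_tsum_and_tsum_le_inv_one_sub (by positivity)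
    ((div_lt_one (by linarith)).2 (by linarith)) hq_bounds
  have hs : s ≠ 0 := by positivity
  have hst : s + t ≠ 0 := by positivity
  have hεt' : ε + t ≠ 0 := by positivity
  have hlow_eq : (1 - r / (2 * s))⁻¹ = 1 + r / ε / (2 + r / ε) := by
    rw [show 1 - r / (2 * s) = (r + 2 * ε) / (2 * s) by field_simp; ring, inv_div]
    field_simp
    ring
  have hup_eq : (1 - r / (s + t))⁻¹ = 1 + r / (ε + t) := by
    rw [show 1 - r / (s + t) = (ε + t) / (s + t) by field_simp; ring, inv_div]
    field_simp
    ring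
  have hr_div : r / (ε + t) ≤ 1 / 2 * (r / ε) := by
    rw [one_div_mul_eq_div, div_div, mul_comm]
    exact div_le_div_of_nonneg_left hr (by positivity) (by linarith)
  exact ⟨hlow_eq ▸ hlow, by linarith [hup_eq ▸ hup]⟩

theorem stmt_11 (rs : ℝ) (hrs : 0 < rs) :
    ∃ C₁ > (0:ℝ), ∃ C₂ > (0:ℝ), ∀ α : ℝ, 1 ≤ α → ∀ ε ∈ Set.Ioo (0:ℝ) 1,
      ∀ c ρ q : ℕ → ℝ,
        c 0 = rs * ε ^ α + ε →
        (∀ n, c (n + 1) = rs * ε ^ α + ε - (rs * ε ^ α) ^ 2 / (rs * ε ^ α + ε + c n)) →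
        ρ 0 = 1 →
        (∀ m, 1 ≤ m → ρ m = rs * ε ^ α / (c 0 + c (m - 1))) →
        (∀ n, q n = ∏ m ∈ Finset.range (n + 1), ρ m) →
        (1 + rs * ε ^ (α - 1) / (2 + rs * ε ^ (α - 1)) ≤ ∑' n, q n ∧
          (∑' n, q n) ≤ 1 + (1/2) * (rs * ε ^ (α - 1)) ∧
          1 + (1/2) * (rs * ε ^ (α - 1)) ≤ 1 + rs / 2) ∧
        C₁ ≤ ∑' n, q n ∧ (∑' n, q n) ≤ C₂ := by
  refine ⟨1, one_pos, 1 + rs / 2, by positivity, ?_⟩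
  intro α hα ε ⟨hε0, hε1⟩ c ρ q hc0 hrec hρ0 hρ hq
  have hratio : rs * ε ^ (α - 1) = rs * ε ^ α / ε := by
    rw [rpow_sub hε0, rpow_one, mul_div_assoc]
  obtain ⟨hlow, hup⟩ := one_add_div_le_tsum_and_tsum_le_one_add_half_div (by positivity) hε0 hc0 hrec hρ0 hρ hq
  rw [← hratio] at hlow hup
  have hpow_le : ε ^ (α - 1) ≤ 1 := rpow_le_one hε0.le hε1.le (by linarith)
  have hbound : 1 + 1 / 2 * (rs * ε ^ (α - 1)) ≤ 1 + rs / 2 := by nlinarith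
  have hone : (1 : ℝ) ≤ ∑' n, q n :=
    le_trans (le_add_of_nonneg_right (by positivity)) hlow
  exact ⟨⟨hlow, hup, hbound⟩, hone, hup.trans hbound⟩
end

section
/- Let δ > 0 and define (p_n) by p₀ = 1+δ, p_{n+1} = 1+δ − 1/(1+δ+p_n); let ρ₀ := 1, ρ_m := 1/(1+δ+p_{m−1}) for m ≥ 1, q_n := ∏_{m=0}^n ρ_m, and M := Σ_{n=0}^∞ q_n·p_n. Then the series defining M converges, and there exist constants C₁, C₂ > 0 and δ₀ ∈ (0,1), all independent of δ, such that for all δ ∈ (0,δ₀) one has C₁ ≤ M ≤ C₂; moreover M → π²/6 as δ → 0⁺ up to a bounded multiplicative factor, i.e. M = (π²/6)·O(1). -/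
/-!
Every `p n` lies in `(0, 1 + δ]`, and `q (n + 1) = q n / (1 + δ + p n)`, so `q` decreases at step `n`
by `q n (δ + p n) / (1 + δ + p n) ≥ q n p n / (2 (1 + δ))`. Hence `∑ q n p n` is dominated by the
telescoping series `2 (1 + δ) ∑ (q n - q (n + 1)) ≤ 2 (1 + δ) q 0`, while its first term is `1 + δ`.
-/

open Real

theorem sum_range_le_of_le_mul_sub {a q : ℕ → ℝ} {C : ℝ} (hC : 0 ≤ C) (hq : ∀ n, 0 ≤ q n)
    (h : ∀ n, a n ≤ C * (q n - q (n + 1))) (N : ℕ) :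
    ∑ i ∈ Finset.range N, a i ≤ C * q 0 :=
  calc ∑ i ∈ Finset.range N, a i
      ≤ ∑ i ∈ Finset.range N, C * (q i - q (i + 1)) := Finset.sum_le_sum fun i _ => h i
    _ = C * (q 0 - q N) := by rw [← Finset.mul_sum, Finset.sum_range_sub']
    _ ≤ C * q 0 := by nlinarith [hq N]

section Recurrence

variable {δ : ℝ} {p ρ q : ℕ → ℝ}

theorem pos_and_le_of_recurrence (hδ : 0 ≤ δ) (hp0 : p 0 = 1 + δ)
    (hp : ∀ n, p (n + 1) = 1 + δ - 1 / (1 + δ + p n)) (n : ℕ) : 0 < p n ∧ p n ≤ 1 + δ := by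
  induction n with
  | zero => rw [hp0]; constructor <;> linarith
  | succ n ih =>
    have hinv_lt : 1 / (1 + δ + p n) < 1 := by rw [div_lt_one (by linarith)]; linarith
    have hinv_pos : 0 < 1 / (1 + δ + p n) := by have := ih.1; positivity
    rw [hp n]
    constructor <;> linarith

theorem prod_zero_eq_one (hρ0 : ρ 0 = 1) (hq : ∀ n, q n = ∏ m ∈ Finset.range (n + 1), ρ m) :
    q 0 = 1 := by
  rw [hq 0, Finset.prod_range_one, hρ0]

theorem prod_succ_eq (hρ : ∀ m, 1 ≤ m → ρ m = 1 / (1 + δ + p (m - 1)))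
    (hq : ∀ n, q n = ∏ m ∈ Finset.range (n + 1), ρ m) (n : ℕ) :
    q (n + 1) = q n / (1 + δ + p n) := by
  rw [hq (n + 1), Finset.prod_range_succ, ← hq n, hρ (n + 1) n.succ_pos, Nat.add_sub_cancel,
    mul_one_div]

theorem mul_le_two_mul_sub {n : ℕ} (hδ : 0 ≤ δ) (hpn : 0 < p n ∧ p n ≤ 1 + δ) (hqn : 0 ≤ q n)
    (hq_succ : q (n + 1) = q n / (1 + δ + p n)) :
    q n * p n ≤ 2 * (1 + δ) * (q n - q (n + 1)) := by
  obtain ⟨hpos, hle⟩ := hpn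
  have hden : 0 < 1 + δ + p n := by linarith
  have hdrop : (1 + δ + p n) * (q n - q (n + 1)) = q n * (δ + p n) := by
    rw [hq_succ]; field_simp; ring
  have hdrop_nonneg : 0 ≤ q n - q (n + 1) := by
    nlinarith [mul_nonneg hqn (by linarith : 0 ≤ δ + p n)]
  calc q n * p n ≤ q n * (δ + p n) := by nlinarith
    _ = (1 + δ + p n) * (q n - q (n + 1)) := hdrop.symm
    _ ≤ 2 * (1 + δ) * (q n - q (n + 1)) := by gcongr; linarith

end Recurrence

theorem stmt_12 :
    ∃ C₁ > (0:ℝ), ∃ C₂ > (0:ℝ), ∃ δ₀ ∈ Set.Ioo (0:ℝ) 1, ∀ δ ∈ Set.Ioo (0:ℝ) δ₀,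
      ∀ p ρ q : ℕ → ℝ,
        p 0 = 1 + δ →
        (∀ n, p (n + 1) = 1 + δ - 1 / (1 + δ + p n)) →
        ρ 0 = 1 →
        (∀ m, 1 ≤ m → ρ m = 1 / (1 + δ + p (m - 1))) →
        (∀ n, q n = ∏ m ∈ Finset.range (n + 1), ρ m) →
        Summable (fun n => q n * p n) ∧
        C₁ ≤ ∑' n, q n * p n ∧ (∑' n, q n * p n) ≤ C₂ := by
  refine ⟨1, one_pos, 3, by norm_num, 1 / 2, by norm_num, ?_⟩
  rintro δ ⟨hδ, hδ_lt⟩ p ρ q hp0 hp hρ0 hρ hq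
  have hp_bounds := pos_and_le_of_recurrence hδ.le hp0 hp
  have hq0 := prod_zero_eq_one hρ0 hq
  have hq_succ := prod_succ_eq hρ hq
  have hq_pos : ∀ n, 0 < q n := by
    intro n
    induction n with
    | zero => rw [hq0]; exact one_pos
    | succ n ih => rw [hq_succ n]; have := (hp_bounds n).1; positivity
  have hterm_nonneg : ∀ n, 0 ≤ q n * p n := fun n => (mul_pos (hq_pos n) (hp_bounds n).1).le
  have hpartial : ∀ N, ∑ i ∈ Finset.range N, q i * p i ≤ 3 := fun N =>
    (sum_range_le_of_le_mul_sub (by positivity) (fun n => (hq_pos n).le)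
      (fun n => mul_le_two_mul_sub hδ.le (hp_bounds n) (hq_pos n).le (hq_succ n)) N).trans
      (by rw [hq0]; linarith)
  have hsum : Summable (fun n => q n * p n) := summable_of_sum_range_le hterm_nonneg hpartial
  refine ⟨hsum, ?_, hsum.tsum_le_of_sum_range_le hpartial⟩
  calc (1:ℝ) ≤ q 0 * p 0 := by rw [hq0, hp0]; linarith
    _ ≤ ∑' n, q n * p n := hsum.le_tsum 0 fun i _ => hterm_nonneg i
end

section
/- Let δ > 0 and define (p_n) by p₀ = 1+δ, p_{n+1} = 1+δ − 1/(1+δ+p_n); let ρ₀ := 1, ρ_m := 1/(1+δ+p_{m−1}) for m ≥ 1, and q_n := ∏_{m=0}^n ρ_m. Then p_n > δ for every n, and there exist constants c, C > 0 and δ₀ ∈ (0,1) such that for all δ ∈ (0,δ₀), c/δ ≤ Σ_{n=0}^∞ q_n/(p_n − δ)² ≤ C/δ. -/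
/-!
Put `w n = (p n - δ) / q n`. The recursion for `p` turns into `w (n + 1) = w n + a n` with
`a n = 2δ / q n`, `w 0 = 1`, and the `n`-th term of the series is `(2δ)⁻¹ · a n / w n ^ 2`.
Since `a n / (w n * w (n + 1)) = (w n)⁻¹ - (w (n + 1))⁻¹`, the series is comparable to a
telescoping one as soon as `w n ≤ w (n + 1) ≤ 2 w n`, i.e. `p n ≥ 3δ`, which holds for
`δ ≤ 1/4`. As `w n ≥ 1 + 2δn → ∞`, the telescoping sum is `(w 0)⁻¹ = 1`, so the series
lies between `1 / (2δ)` and `1 / δ`.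
-/

open Filter

section Telescoping

variable {w a : ℕ → ℝ}

lemma tendsto_atTop_of_increment_ge {ε : ℝ} (hε : 0 < ε) (hrec : ∀ n, w (n + 1) = w n + a n)
    (ha : ∀ n, ε ≤ a n) : Tendsto w atTop atTop := by
  have hlin : ∀ n : ℕ, w 0 + n * ε ≤ w n := by
    intro n
    induction n with
    | zero => simp
    | succ n ih => rw [hrec]; push_cast; linarith [ha n]
  exact tendsto_atTop_mono hlin <|
    tendsto_atTop_add_const_left _ _ (tendsto_natCast_atTop_atTop.atTop_mul_const hε)

variable (hw : ∀ n, 0 < w n) (ha : ∀ n, 0 ≤ a n) (hrec : ∀ n, w (n + 1) = w n + a n)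
include hw hrec

lemma inv_sub_inv_succ_eq (n : ℕ) : (w n)⁻¹ - (w (n + 1))⁻¹ = a n / (w n * w (n + 1)) := by
  have := (hw n).ne'
  have := (hw (n + 1)).ne'
  field_simp
  linarith [hrec n]

include ha

lemma hasSum_inv_sub_inv_succ (htop : Tendsto w atTop atTop) :
    HasSum (fun n => (w n)⁻¹ - (w (n + 1))⁻¹) (w 0)⁻¹ := by
  have hnonneg : ∀ n, 0 ≤ (w n)⁻¹ - (w (n + 1))⁻¹ := fun n => by
    rw [inv_sub_inv_succ_eq hw hrec]
    exact div_nonneg (ha n) (mul_pos (hw n) (hw (n + 1))).le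
  rw [hasSum_iff_tendsto_nat_of_nonneg hnonneg]
  simp only [Finset.sum_range_sub' (fun n => (w n)⁻¹)]
  simpa using (tendsto_const_nhds (x := (w 0)⁻¹)).sub htop.inv_tendsto_atTop

lemma inv_sub_inv_succ_le_div_sq (n : ℕ) : (w n)⁻¹ - (w (n + 1))⁻¹ ≤ a n / w n ^ 2 := by
  rw [inv_sub_inv_succ_eq hw hrec, sq]
  exact div_le_div_of_nonneg_left (ha n) (mul_pos (hw n) (hw n))
    (mul_le_mul_of_nonneg_left (by linarith [hrec n, ha n]) (hw n).le)

lemma div_sq_le_two_mul_inv_sub_inv_succ (hle : ∀ n, a n ≤ w n) (n : ℕ) :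
    a n / w n ^ 2 ≤ 2 * ((w n)⁻¹ - (w (n + 1))⁻¹) := by
  rw [inv_sub_inv_succ_eq hw hrec, mul_div_assoc', mul_comm 2 (a n), ← div_div_eq_mul_div]
  exact div_le_div_of_nonneg_left (ha n) (by nlinarith [hw n, hw (n + 1)])
    (by nlinarith [hw n, hrec n, hle n])

theorem summable_div_sq_and_bounds (hle : ∀ n, a n ≤ w n) (htop : Tendsto w atTop atTop) :
    Summable (fun n => a n / w n ^ 2) ∧
      (w 0)⁻¹ ≤ ∑' n, a n / w n ^ 2 ∧ ∑' n, a n / w n ^ 2 ≤ 2 * (w 0)⁻¹ := by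
  have htel := hasSum_inv_sub_inv_succ hw ha hrec htop
  have hsum : Summable (fun n => a n / w n ^ 2) :=
    (htel.mul_left 2).summable.of_nonneg_of_le (fun n => div_nonneg (ha n) (sq_nonneg _))
      (div_sq_le_two_mul_inv_sub_inv_succ hw ha hrec hle)
  exact ⟨hsum, hasSum_le (inv_sub_inv_succ_le_div_sq hw ha hrec) htel hsum.hasSum,
    hasSum_le (div_sq_le_two_mul_inv_sub_inv_succ hw ha hrec hle) hsum.hasSum (htel.mul_left 2)⟩

end Telescoping

section Recursion

variable {δ : ℝ} {p : ℕ → ℝ} (hp0 : p 0 = 1 + δ)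
  (hrec : ∀ n, p (n + 1) = 1 + δ - 1 / (1 + δ + p n))
include hp0 hrec

lemma lt_of_rec (hδ : 0 < δ) (n : ℕ) : δ < p n := by
  induction n with
  | zero => rw [hp0]; linarith
  | succ n ih =>
    have : 1 / (1 + δ + p n) < 1 := by rw [div_lt_one (by linarith)]; linarith
    rw [hrec]
    linarith

lemma three_mul_le_of_rec (hδ : 0 < δ) (hδ4 : δ ≤ 1 / 4) (n : ℕ) : 3 * δ ≤ p n := by
  induction n with
  | zero => rw [hp0]; linarith
  | succ n ih =>
    -- `1 / (1 + 4δ) ≤ 1 - 2δ` is `2δ(1 - 4δ) ≥ 0`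
    have : 1 / (1 + δ + p n) ≤ 1 - 2 * δ := by
      rw [div_le_iff₀ (by linarith)]; nlinarith
    rw [hrec]
    linarith

variable {q : ℕ → ℝ} (hq0 : q 0 = 1) (hqsucc : ∀ n, q (n + 1) = q n / (1 + δ + p n))
include hq0 hqsucc

lemma pos_of_div_rec (hδ : 0 < δ) (n : ℕ) : 0 < q n := by
  induction n with
  | zero => simp [hq0]
  | succ n ih => rw [hqsucc]; exact div_pos ih (by linarith [lt_of_rec hp0 hrec hδ n])

lemma le_one_of_div_rec (hδ : 0 < δ) (n : ℕ) : q n ≤ 1 := by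
  induction n with
  | zero => simp [hq0]
  | succ n ih =>
    have := lt_of_rec hp0 hrec hδ n
    rw [hqsucc, div_le_one (by linarith)]
    linarith

lemma sub_div_succ_of_rec (hδ : 0 < δ) (n : ℕ) :
    (p (n + 1) - δ) / q (n + 1) = (p n - δ) / q n + 2 * δ / q n := by
  have := (pos_of_div_rec hp0 hrec hq0 hqsucc hδ n).ne'
  have : 1 + δ + p n ≠ 0 := by linarith [lt_of_rec hp0 hrec hδ n]
  rw [hrec, hqsucc]
  field_simp
  ring

theorem summable_div_sub_sq_and_bounds (hδ : 0 < δ) (hδ4 : δ ≤ 1 / 4) :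
    Summable (fun n => q n / (p n - δ) ^ 2) ∧
      1 / 2 / δ ≤ ∑' n, q n / (p n - δ) ^ 2 ∧ ∑' n, q n / (p n - δ) ^ 2 ≤ 1 / δ := by
  have hlt := lt_of_rec hp0 hrec hδ
  have hqpos := pos_of_div_rec hp0 hrec hq0 hqsucc hδ
  have hwrec := sub_div_succ_of_rec hp0 hrec hq0 hqsucc hδ
  set w : ℕ → ℝ := fun n => (p n - δ) / q n
  set a : ℕ → ℝ := fun n => 2 * δ / q n
  have hw : ∀ n, 0 < w n := fun n => div_pos (by linarith [hlt n]) (hqpos n)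
  have ha : ∀ n, 0 ≤ a n := fun n => div_nonneg (by linarith) (hqpos n).le
  have hle : ∀ n, a n ≤ w n := fun n =>
    div_le_div_of_nonneg_right (by linarith [three_mul_le_of_rec hp0 hrec hδ hδ4 n]) (hqpos n).le
  have htop : Tendsto w atTop atTop :=
    tendsto_atTop_of_increment_ge (by linarith : 0 < 2 * δ) hwrec fun n =>
      le_div_self (by linarith) (hqpos n) (le_one_of_div_rec hp0 hrec hq0 hqsucc hδ n)
  obtain ⟨hsum, hlo, hhi⟩ := summable_div_sq_and_bounds hw ha hwrec hle htop
  have hterm : (fun n => q n / (p n - δ) ^ 2) = fun n => (2 * δ)⁻¹ * (a n / w n ^ 2) := by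
    ext n
    have := (hqpos n).ne'
    have : p n - δ ≠ 0 := by linarith [hlt n]
    simp only [w, a]
    field_simp
  have hw0 : w 0 = 1 := by simp [w, hq0, hp0]
  rw [hterm, tsum_mul_left]
  rw [hw0, inv_one] at hlo hhi
  refine ⟨hsum.mul_left _, ?_, ?_⟩
  · calc 1 / 2 / δ = (2 * δ)⁻¹ * 1 := by field_simp
      _ ≤ _ := by gcongr
  · calc _ ≤ (2 * δ)⁻¹ * (2 * 1) := by gcongr
      _ = 1 / δ := by field_simp

end Recursion

theorem stmt_13 :
    (∀ δ : ℝ, 0 < δ → ∀ p : ℕ → ℝ, p 0 = 1 + δ →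
      (∀ n, p (n + 1) = 1 + δ - 1 / (1 + δ + p n)) → ∀ n, δ < p n) ∧
    ∃ c > (0:ℝ), ∃ C > (0:ℝ), ∃ δ₀ ∈ Set.Ioo (0:ℝ) 1, ∀ δ ∈ Set.Ioo (0:ℝ) δ₀,
      ∀ p ρ q : ℕ → ℝ,
        p 0 = 1 + δ →
        (∀ n, p (n + 1) = 1 + δ - 1 / (1 + δ + p n)) →
        ρ 0 = 1 →
        (∀ m, 1 ≤ m → ρ m = 1 / (1 + δ + p (m - 1))) →
        (∀ n, q n = ∏ m ∈ Finset.range (n + 1), ρ m) →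
        Summable (fun n => q n / (p n - δ) ^ 2) ∧
        c / δ ≤ ∑' n, q n / (p n - δ) ^ 2 ∧
        (∑' n, q n / (p n - δ) ^ 2) ≤ C / δ := by
  refine ⟨fun δ hδ p hp0 hrec => lt_of_rec hp0 hrec hδ, 1 / 2, by norm_num, 1, by norm_num,
    1 / 4, by norm_num, ?_⟩
  rintro δ ⟨hδ, hδ4⟩ p ρ q hp0 hrec hρ0 hρ hq
  have hq0 : q 0 = 1 := by simp [hq, hρ0]
  have hqsucc : ∀ n, q (n + 1) = q n / (1 + δ + p n) := fun n => by
    rw [hq, hq, Finset.prod_range_succ, hρ (n + 1) (by omega), Nat.add_sub_cancel, mul_one_div]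
  exact summable_div_sub_sq_and_bounds hp0 hrec hq0 hqsucc hδ hδ4.le
end

section
/- Let δ > 0 and define (p_n) by p₀ = 1+δ, p_{n+1} = 1+δ − 1/(1+δ+p_n); let ρ₀ := 1, ρ_m := 1/(1+δ+p_{m−1}) for m ≥ 1, and q_n := ∏_{m=0}^n ρ_m. There exist constants c, C > 0 and δ₀ ∈ (0,1) such that for all δ ∈ (0,δ₀), c ≤ Σ_{n=0}^∞ q_n·(1/(p_n − δ) − 1/(p_n + δ)) ≤ C; that is, the potential difference sum Σ q_n·2δ/(p_n² − δ²) is bounded above and below by positive constants independent of δ. -/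
/-!
With `s n = q n / (p n - δ)`, the recursion gives `s (n + 1) = q n / (p n + δ)`, so the `n`-th
term of the series is `s n - s (n + 1)`: the series telescopes to `s 0 = 1` for every `δ > 0`.
The sequence `s` is summable by the ratio test, since `δ < p n ≤ 1 + δ` gives
`s (n + 1) / s n = (p n - δ) / (p n + δ) ≤ 1 / (1 + 2δ)`.
-/

open Filter Set

theorem Summable.hasSum_sub_succ {G : Type*} [AddCommGroup G] [TopologicalSpace G]
    [IsTopologicalAddGroup G] {f : ℕ → G} (hf : Summable f) :
    HasSum (fun n => f n - f (n + 1)) (f 0) := by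
  simpa using hf.hasSum.sub ((hasSum_nat_add_iff' 1).mpr hf.hasSum)

section Recursion

variable {δ : ℝ} {p ρ q : ℕ → ℝ}

theorem mem_Ioc_of_recursion (hδ : 0 ≤ δ) (hp0 : p 0 = 1 + δ)
    (hp : ∀ n, p (n + 1) = 1 + δ - 1 / (1 + δ + p n)) (n : ℕ) : p n ∈ Ioc δ (1 + δ) := by
  induction n with
  | zero => rw [hp0]; constructor <;> linarith
  | succ n ih =>
    have hden : 1 < 1 + δ + p n := by linarith [ih.1]
    rw [hp n]
    constructor
    · linarith [(div_lt_one (by linarith)).mpr hden]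
    · linarith [one_div_pos.mpr (zero_lt_one.trans hden)]

theorem div_recursion_sub_eq {a x δ : ℝ} (hx : 0 < x + δ) :
    a / (1 + δ + x) / (1 + δ - 1 / (1 + δ + x) - δ) = a / (x + δ) := by
  have hden : 1 + δ + x ≠ 0 := by linarith
  rw [div_div]
  congr 1
  rw [mul_sub, mul_sub, mul_one_div_cancel hden]
  ring

theorem sub_div_add_le_one_div {x δ : ℝ} (hδ : 0 ≤ δ) (hx : x ∈ Ioc δ (1 + δ)) :
    (x - δ) / (x + δ) ≤ 1 / (1 + 2 * δ) := by
  rw [div_le_div_iff₀ (by linarith [hx.1]) (by linarith)]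
  nlinarith [hx.2]

theorem hasSum_potential_difference (hδ : 0 < δ) (hp0 : p 0 = 1 + δ)
    (hp : ∀ n, p (n + 1) = 1 + δ - 1 / (1 + δ + p n)) (hρ0 : ρ 0 = 1)
    (hρ : ∀ m, 1 ≤ m → ρ m = 1 / (1 + δ + p (m - 1)))
    (hq : ∀ n, q n = ∏ m ∈ Finset.range (n + 1), ρ m) :
    HasSum (fun n => q n * (1 / (p n - δ) - 1 / (p n + δ))) 1 := by
  have hpI := mem_Ioc_of_recursion hδ.le hp0 hp
  have hsub : ∀ n, 0 < p n - δ := fun n => sub_pos.mpr (hpI n).1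
  have hadd : ∀ n, 0 < p n + δ := fun n => by linarith [(hpI n).1]
  have hq_succ (n : ℕ) : q (n + 1) = q n / (1 + δ + p n) := by
    rw [hq, Finset.prod_range_succ, ← hq, hρ _ le_add_self, Nat.add_sub_cancel, mul_one_div]
  obtain ⟨s, hs_def⟩ : ∃ s : ℕ → ℝ, ∀ n, s n = q n / (p n - δ) := ⟨_, fun _ => rfl⟩
  have hs_succ (n : ℕ) : s (n + 1) = q n / (p n + δ) := by
    rw [hs_def, hq_succ, hp, div_recursion_sub_eq (hadd n)]
  have hratio (n : ℕ) : ‖s (n + 1)‖ ≤ 1 / (1 + 2 * δ) * ‖s n‖ := by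
    have hfactor : s (n + 1) = (p n - δ) / (p n + δ) * s n := by
      rw [hs_succ, hs_def]
      field_simp [(hsub n).ne']
    rw [hfactor, norm_mul, Real.norm_of_nonneg (div_pos (hsub n) (hadd n)).le]
    exact mul_le_mul_of_nonneg_right (sub_div_add_le_one_div hδ.le (hpI n)) (norm_nonneg _)
  have hs : Summable s :=
    summable_of_ratio_norm_eventually_le ((div_lt_one (by linarith)).mpr (by linarith))
      (Eventually.of_forall hratio)
  have hs0 : s 0 = 1 := by
    simp [hs_def, hq, hρ0, hp0]
  have hterm : (fun n => q n * (1 / (p n - δ) - 1 / (p n + δ))) = fun n => s n - s (n + 1) := by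
    ext n
    rw [hs_succ, hs_def, mul_sub, mul_one_div, mul_one_div]
  rw [hterm, ← hs0]
  exact hs.hasSum_sub_succ

end Recursion

theorem stmt_14 :
    ∃ c > (0:ℝ), ∃ C > (0:ℝ), ∃ δ₀ ∈ Set.Ioo (0:ℝ) 1, ∀ δ ∈ Set.Ioo (0:ℝ) δ₀,
      ∀ p ρ q : ℕ → ℝ,
        p 0 = 1 + δ →
        (∀ n, p (n + 1) = 1 + δ - 1 / (1 + δ + p n)) →
        ρ 0 = 1 →
        (∀ m, 1 ≤ m → ρ m = 1 / (1 + δ + p (m - 1))) →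
        (∀ n, q n = ∏ m ∈ Finset.range (n + 1), ρ m) →
        Summable (fun n => q n * (1 / (p n - δ) - 1 / (p n + δ))) ∧
        c ≤ ∑' n, q n * (1 / (p n - δ) - 1 / (p n + δ)) ∧
        (∑' n, q n * (1 / (p n - δ) - 1 / (p n + δ))) ≤ C := by
  refine ⟨1, one_pos, 1, one_pos, 1 / 2, ⟨by norm_num, by norm_num⟩, ?_⟩
  intro δ hδ p ρ q hp0 hp hρ0 hρ hq
  have hsum := hasSum_potential_difference hδ.1 hp0 hp hρ0 hρ hq
  exact ⟨hsum.summable, hsum.tsum_eq.ge, hsum.tsum_eq.le⟩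
end

section
/- Let ε, r > 0, e₁ = (1,0,0) ∈ ℝ³, and define (c_n) by c₀ = r+ε, c_{n+1} = r+ε − r²/(r+ε+c_n); let ρ₀ := 1, ρ_m := r/(c₀+c_{m−1}) for m ≥ 1, q_n := ∏_{m=0}^n ρ_m, and Q := Σ_{n=0}^∞ q_n (assumed finite). Then for every x ∈ ℝ³ with |x + (r+ε)e₁| = r, Σ_{n=0}^∞ q_n·(1/|x − c_n e₁| − 1/|x + c_n e₁|) = −1/r. Consequently, the function h₀(x) = −(1/(4πQ))·Σ_{n=0}^∞ q_n·(1/|x − c_n e₁| − 1/|x + c_n e₁|) is identically equal to the constant C₂ = 1/(4πrQ) on the sphere ∂B₂ = {x : |x + (r+ε)e₁| = r}, and by the odd symmetry h₀(−x₁,x₂,x₃) = −h₀(x₁,x₂,x₃) it equals C₁ = −1/(4πrQ) on ∂B₁ = {x : |x − (r+ε)e₁| = r}. -/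
/-!
On the sphere `‖x + a • e₁‖ = r` (with `a = r + ε`), the charge at `c n • e₁` has its Kelvin image
at `-c (n + 1) • e₁`: `‖x - c n • e₁‖ = (a + c n) / r * ‖x + c (n + 1) • e₁‖`, and
`q (n + 1) = q n * r / (a + c n)`. Hence the `n`-th term of the series equals `u (n + 1) - u n`
with `u n = q n / ‖x + c n • e₁‖`. The image points stay a fixed distance inside the ball, so
`u n = O(q n) → 0` and the series telescopes to `-u 0 = -1 / r`. The values on the other sphere
follow from the reflection `x ↦ x - 2 x₀ e₁`, which swaps `±c n • e₁`.
-/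

open Real Filter Topology

theorem hasSum_sub_of_abs_le_mul {u q : ℕ → ℝ} (hq : Summable q) {C : ℝ}
    (hu : ∀ n, |u n| ≤ C * q n) : HasSum (fun n ↦ u (n + 1) - u n) (-u 0) := by
  have hsummable : Summable fun n ↦ u (n + 1) - u n := by
    refine Summable.of_norm_bounded
      (((summable_nat_add_iff 1).2 hq).mul_left C |>.add (hq.mul_left C)) fun n ↦ ?_
    exact (norm_sub_le _ _).trans (add_le_add (hu (n + 1)) (hu n))
  have hu0 : Tendsto u atTop (𝓝 0) :=
    squeeze_zero_norm hu (by simpa using hq.tendsto_atTop_zero.const_mul C)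
  refine (hsummable.hasSum_iff_tendsto_nat).2 ?_
  simp_rw [Finset.sum_range_sub]
  simpa using hu0.sub_const (u 0)

theorem mem_Icc_of_sq_le_sq_sub_sq {a r : ℝ} {c : ℕ → ℝ} (ha : 0 < a) (hc0 : c 0 = a)
    (hcrec : ∀ n, c (n + 1) = a - r ^ 2 / (a + c n)) {s : ℝ} (hs0 : 0 ≤ s)
    (hs : s ^ 2 ≤ a ^ 2 - r ^ 2) (n : ℕ) : c n ∈ Set.Icc s a := by
  induction n with
  | zero => exact hc0 ▸ ⟨by nlinarith, le_rfl⟩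
  | succ n ih =>
    have hpos : 0 < a + c n := by linarith [ih.1]
    rw [hcrec]
    constructor
    · have : r ^ 2 / (a + c n) ≤ a - s := by
        rw [div_le_iff₀ hpos]
        nlinarith [ih.1]
      linarith
    · linarith [div_nonneg (sq_nonneg r) hpos.le]

section UnitVector

variable {E : Type*} [NormedAddCommGroup E] [InnerProductSpace ℝ E] {e : E}

theorem norm_add_smul_sq_of_norm_eq_one (he : ‖e‖ = 1) (x : E) (t : ℝ) :
    ‖x + t • e‖ ^ 2 = ‖x‖ ^ 2 + 2 * t * inner ℝ x e + t ^ 2 := by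
  rw [norm_add_sq_real, real_inner_smul_right, norm_smul, he, norm_eq_abs, mul_one, sq_abs]
  ring

theorem norm_reflection_add_smul (he : ‖e‖ = 1) (x : E) (t : ℝ) :
    ‖x - (2 * inner ℝ x e) • e + t • e‖ = ‖x - t • e‖ := by
  have h : x - (2 * inner ℝ x e) • e + t • e = x + (t - 2 * inner ℝ x e) • e := by module
  have hsq := norm_add_smul_sq_of_norm_eq_one he x (t - 2 * inner ℝ x e)
  have hsq' := norm_add_smul_sq_of_norm_eq_one he x (-t)
  rw [neg_smul, ← sub_eq_add_neg] at hsq'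
  rw [h, ← sq_eq_sq₀ (norm_nonneg _) (norm_nonneg _), hsq, hsq']
  ring

/-- `b • e` and `-(a - r² / (a + b)) • e` are inverse points with respect to the sphere
`‖x + a • e‖ = r`, so the ratio of the distances of `x` to them is constant on it. -/
theorem norm_sub_smul_eq_mul_norm_add_smul (he : ‖e‖ = 1) {a b r : ℝ} (hr : 0 < r)
    (hab : 0 < a + b) {x : E} (hx : ‖x + a • e‖ = r) :
    ‖x - b • e‖ = (a + b) / r * ‖x + (a - r ^ 2 / (a + b)) • e‖ := by
  have hxx : ‖x‖ ^ 2 = r ^ 2 - 2 * a * inner ℝ x e - a ^ 2 := by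
    rw [← hx, norm_add_smul_sq_of_norm_eq_one he]
    ring
  have hsub := norm_add_smul_sq_of_norm_eq_one he x (-b)
  rw [neg_smul, ← sub_eq_add_neg] at hsub
  rw [← sq_eq_sq₀ (norm_nonneg _) (by positivity), mul_pow, hsub,
    norm_add_smul_sq_of_norm_eq_one he, hxx]
  field_simp
  ring

theorem sub_le_norm_add_smul (he : ‖e‖ = 1) {a c r : ℝ} (hca : c ≤ a) {x : E}
    (hx : ‖x + a • e‖ = r) : c - (a - r) ≤ ‖x + c • e‖ := by
  have h := norm_sub_norm_le (x + a • e) ((a - c) • e)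
  rw [show x + a • e - (a - c) • e = x + c • e by module, hx, norm_smul, he, mul_one,
    norm_of_nonneg (sub_nonneg.2 hca)] at h
  linarith

theorem hasSum_image_charges (he : ‖e‖ = 1) {a r : ℝ} {c : ℕ → ℝ} (hr : 0 < r) (hra : r < a)
    (hc0 : c 0 = a) (hcrec : ∀ n, c (n + 1) = a - r ^ 2 / (a + c n)) {q : ℕ → ℝ} (hq0 : q 0 = 1)
    (hqrec : ∀ n, q (n + 1) = q n * (r / (a + c n))) (hq : Summable q) {x : E}
    (hx : ‖x + a • e‖ = r) :
    HasSum (fun n ↦ q n * (1 / ‖x - c n • e‖ - 1 / ‖x + c n • e‖)) (-(1 / r)) := by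
  set s := √(a ^ 2 - r ^ 2)
  have hs : s ^ 2 = a ^ 2 - r ^ 2 := sq_sqrt (by nlinarith)
  have hc := mem_Icc_of_sq_le_sq_sub_sq (hr.trans hra) hc0 hcrec (sqrt_nonneg _) hs.le
  have hca (n : ℕ) : 0 < a + c n := by linarith [(hc n).1, sqrt_nonneg (a ^ 2 - r ^ 2)]
  -- `s` is the fixed point of the recursion; the charges `-c n • e` stay in `[-a, -s] • e`,
  -- at distance at least `s - (a - r) > 0` from the sphere
  have hδ : 0 < s - (a - r) := by nlinarith [sqrt_nonneg (a ^ 2 - r ^ 2)]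
  have hlow (n : ℕ) : s - (a - r) ≤ ‖x + c n • e‖ :=
    le_trans (by linarith [(hc n).1]) (sub_le_norm_add_smul he (hc n).2 hx)
  have hqnn (n : ℕ) : 0 ≤ q n := by
    induction n with
    | zero => simp [hq0]
    | succ n ih => rw [hqrec]; exact mul_nonneg ih (div_pos hr (hca n)).le
  set u : ℕ → ℝ := fun n ↦ q n / ‖x + c n • e‖
  have hterm (n : ℕ) : q n * (1 / ‖x - c n • e‖ - 1 / ‖x + c n • e‖) = u (n + 1) - u n := by
    simp only [u]
    rw [norm_sub_smul_eq_mul_norm_add_smul he hr (hca n) hx, ← hcrec, hqrec]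
    field_simp [(hca n).ne']
  have hu (n : ℕ) : |u n| ≤ (s - (a - r))⁻¹ * q n := by
    rw [abs_of_nonneg (div_nonneg (hqnn n) (norm_nonneg _)), div_eq_mul_inv, mul_comm]
    exact mul_le_mul_of_nonneg_right (inv_anti₀ hδ (hlow n)) (hqnn n)
  have hu0 : u 0 = 1 / r := by simp only [u, hq0, hc0, hx]
  simpa only [hterm, hu0] using hasSum_sub_of_abs_le_mul hq hu

end UnitVector

theorem stmt_17_general (ε r : ℝ) (hε : 0 < ε) (hr : 0 < r)
    (e₁ : EuclideanSpace ℝ (Fin 3)) (he₁ : e₁ = EuclideanSpace.single 0 1)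
    (c : ℕ → ℝ) (hc0 : c 0 = r + ε)
    (hcrec : ∀ n, c (n + 1) = r + ε - r ^ 2 / (r + ε + c n))
    (ρ : ℕ → ℝ) (hρ0 : ρ 0 = 1)
    (hρ : ∀ m, 1 ≤ m → ρ m = r / (c 0 + c (m - 1)))
    (q : ℕ → ℝ) (hq : ∀ n, q n = ∏ m ∈ Finset.range (n + 1), ρ m)
    (hsum : Summable q)
    (Q : ℝ)
    (h₀ : EuclideanSpace ℝ (Fin 3) → ℝ)
    (hh₀ : ∀ x, h₀ x = -(1 / (4 * Real.pi * Q)) *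
        ∑' n, q n * (1 / ‖x - c n • e₁‖ - 1 / ‖x + c n • e₁‖)) :
    (∀ x : EuclideanSpace ℝ (Fin 3), ‖x + (r + ε) • e₁‖ = r →
      (∑' n, q n * (1 / ‖x - c n • e₁‖ - 1 / ‖x + c n • e₁‖)) = -(1 / r) ∧
      h₀ x = 1 / (4 * Real.pi * r * Q)) ∧
    (∀ x : EuclideanSpace ℝ (Fin 3), h₀ (x - (2 * x 0) • e₁) = -h₀ x) ∧
    (∀ x : EuclideanSpace ℝ (Fin 3), ‖x - (r + ε) • e₁‖ = r →
      h₀ x = -(1 / (4 * Real.pi * r * Q))) := by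
  have he : ‖e₁‖ = 1 := by simp [he₁]
  have hcoord (x : EuclideanSpace ℝ (Fin 3)) : x 0 = inner ℝ x e₁ := by
    simp [he₁, EuclideanSpace.inner_single_right]
  have hq0 : q 0 = 1 := by simp [hq, hρ0]
  have hqrec (n : ℕ) : q (n + 1) = q n * (r / (r + ε + c n)) := by
    rw [hq, hq, Finset.prod_range_succ, hρ (n + 1) n.succ_pos, Nat.add_sub_cancel, hc0]
  have hsphere (x : EuclideanSpace ℝ (Fin 3)) (hx : ‖x + (r + ε) • e₁‖ = r) :
      (∑' n, q n * (1 / ‖x - c n • e₁‖ - 1 / ‖x + c n • e₁‖)) = -(1 / r) ∧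
        h₀ x = 1 / (4 * Real.pi * r * Q) := by
    have hsum_eq := (hasSum_image_charges he hr (by linarith) hc0 hcrec hq0 hqrec hsum
      hx).tsum_eq
    exact ⟨hsum_eq, by rw [hh₀, hsum_eq]; ring⟩
  have hodd (x : EuclideanSpace ℝ (Fin 3)) : h₀ (x - (2 * x 0) • e₁) = -h₀ x := by
    have hterm (n : ℕ) : q n * (1 / ‖x - (2 * x 0) • e₁ - c n • e₁‖ -
        1 / ‖x - (2 * x 0) • e₁ + c n • e₁‖) =
          -(q n * (1 / ‖x - c n • e₁‖ - 1 / ‖x + c n • e₁‖)) := by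
      have hminus := norm_reflection_add_smul he x (-c n)
      rw [neg_smul, ← sub_eq_add_neg, sub_neg_eq_add] at hminus
      rw [hcoord, hminus, norm_reflection_add_smul he]
      ring
    rw [hh₀, hh₀, tsum_congr hterm, tsum_neg]
    ring
  refine ⟨hsphere, hodd, fun x hx ↦ ?_⟩
  have hreflected : ‖x - (2 * x 0) • e₁ + (r + ε) • e₁‖ = r := by
    rw [hcoord, norm_reflection_add_smul he, hx]
  linarith [hodd x, (hsphere _ hreflected).2]

theorem stmt_17 (ε r : ℝ) (hε : 0 < ε) (hr : 0 < r)
    (e₁ : EuclideanSpace ℝ (Fin 3)) (he₁ : e₁ = EuclideanSpace.single 0 1)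
    (c : ℕ → ℝ) (hc0 : c 0 = r + ε)
    (hcrec : ∀ n, c (n + 1) = r + ε - r ^ 2 / (r + ε + c n))
    (ρ : ℕ → ℝ) (hρ0 : ρ 0 = 1)
    (hρ : ∀ m, 1 ≤ m → ρ m = r / (c 0 + c (m - 1)))
    (q : ℕ → ℝ) (hq : ∀ n, q n = ∏ m ∈ Finset.range (n + 1), ρ m)
    (hsum : Summable q)
    (Q : ℝ) (hQ : Q = ∑' n, q n)
    (h₀ : EuclideanSpace ℝ (Fin 3) → ℝ)
    (hh₀ : ∀ x, h₀ x = -(1 / (4 * Real.pi * Q)) *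
        ∑' n, q n * (1 / ‖x - c n • e₁‖ - 1 / ‖x + c n • e₁‖)) :
    (∀ x : EuclideanSpace ℝ (Fin 3), ‖x + (r + ε) • e₁‖ = r →
      (∑' n, q n * (1 / ‖x - c n • e₁‖ - 1 / ‖x + c n • e₁‖)) = -(1 / r) ∧
      h₀ x = 1 / (4 * Real.pi * r * Q)) ∧
    (∀ x : EuclideanSpace ℝ (Fin 3), h₀ (x - (2 * x 0) • e₁) = -h₀ x) ∧
    (∀ x : EuclideanSpace ℝ (Fin 3), ‖x - (r + ε) • e₁‖ = r →
      h₀ x = -(1 / (4 * Real.pi * r * Q))) :=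
  stmt_17_general ε r hε hr e₁ he₁ c hc0 hcrec ρ hρ0 hρ q hq hsum Q h₀ hh₀
end

section
/- Let ε, r > 0 with δ := ε/r, e₁ = (1,0,0) ∈ ℝ³, and define (c_n) by c₀ = r+ε, c_{n+1} = r+ε − r²/(r+ε+c_n); let ρ₀ := 1, ρ_m := r/(c₀+c_{m−1}) for m ≥ 1, q_n := ∏_{m=0}^n ρ_m, Q := Σ_{n=0}^∞ q_n, and h₀(x) := −(1/(4πQ))·Σ_{n=0}^∞ q_n·(1/|x − c_n e₁| − 1/|x + c_n e₁|). Then for every x outside the closed balls B̄₁ ∪ B̄₂ (balls of radius r centered at ±(r+ε)e₁), the pointwise bound |∇h₀(x)| ≤ (1/(2πQ))·Σ_{n=0}^∞ q_n/(c_n − ε)² holds; moreover there exist C > 0 and δ₀ ∈ (0,1) such that for all δ ∈ (0,δ₀), sup_{x ∉ B̄₁∪B̄₂} |∇h₀(x)| ≤ C/(Q·r·ε). -/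
/-!
Let `λ > 1` solve `r (λ + λ⁻¹) = 2 (r + ε)` and `U n = (λⁿ - λ⁻ⁿ) / (λ - λ⁻¹)`, so that
`U (n + 2) = (λ + λ⁻¹) U (n + 1) - U n`. This linearises the continued fraction:
`c n = r + ε - r U n / U (n + 1)` and `q n = 1 / U (n + 1)`, hence
`c n - ε = r (U (n + 1) - U n) / U (n + 1)`. Since `U (n + 1) ≤ λⁿ⁺¹ / (λ - λ⁻¹)` and
`U (n + 1) - U n ≥ (λ - 1) λⁿ / (λ - λ⁻¹)`, the terms `q n / (c n - ε)²` are dominated by a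
geometric series in `λ⁻¹` with sum `(λ + 1) / (2 r ε)`, and `λ < 3` once `ε < r / 2`.

Both charges `± c n e₁` lie at distance at least `c n - ε` from every point outside the two balls,
so there the gradient of the `n`-th dipole is at most `2 q n / (c n - ε)²`, which is summable: the
series can be differentiated termwise.
-/

open Real

noncomputable def lucasU (l : ℝ) (n : ℕ) : ℝ := (l ^ n - l⁻¹ ^ n) / (l - l⁻¹)

section LucasU

variable {l : ℝ}

@[simp]
theorem lucasU_zero (l : ℝ) : lucasU l 0 = 0 := by simp [lucasU]

theorem lucasU_add_two (hl : l ≠ 0) (n : ℕ) :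
    lucasU l (n + 2) = (l + l⁻¹) * lucasU l (n + 1) - lucasU l n := by
  simp only [lucasU, inv_pow]
  rw [mul_div_assoc', div_sub_div_same]
  congr 1
  field_simp
  ring

theorem sub_inv_pos (hl : 1 < l) : 0 < l - l⁻¹ := by
  have : l⁻¹ < 1 := inv_lt_one_of_one_lt₀ hl
  linarith

theorem lucasU_succ_sub (hl : 1 < l) (n : ℕ) :
    lucasU l (n + 1) - lucasU l n = (l - 1) * (l ^ n + l⁻¹ ^ (n + 1)) / (l - l⁻¹) := by
  have : l ≠ 0 := by positivity
  simp only [lucasU, inv_pow]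
  rw [div_sub_div_same]
  congr 1
  field_simp
  ring

theorem lucasU_succ_le (hl : 1 < l) (n : ℕ) : lucasU l (n + 1) ≤ l ^ (n + 1) / (l - l⁻¹) := by
  have := sub_inv_pos hl
  unfold lucasU
  gcongr
  have : 0 < l⁻¹ := by positivity
  linarith [pow_pos this (n + 1)]

theorem le_lucasU_succ_sub (hl : 1 < l) (n : ℕ) :
    (l - 1) * l ^ n / (l - l⁻¹) ≤ lucasU l (n + 1) - lucasU l n := by
  have := sub_inv_pos hl
  have : 0 < l⁻¹ := by positivity
  rw [lucasU_succ_sub hl]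
  gcongr
  linarith [pow_pos this (n + 1)]

theorem lucasU_succ_sub_pos (hl : 1 < l) (n : ℕ) : 0 < lucasU l (n + 1) - lucasU l n :=
  (div_pos (mul_pos (by linarith) (by positivity)) (sub_inv_pos hl)).trans_le
    (le_lucasU_succ_sub hl n)

theorem lucasU_nonneg (hl : 1 < l) : ∀ n, 0 ≤ lucasU l n
  | 0 => (lucasU_zero l).ge
  | n + 1 => (lucasU_nonneg hl n).trans (sub_nonneg.1 (lucasU_succ_sub_pos hl n).le)

theorem lucasU_succ_pos (hl : 1 < l) (n : ℕ) : 0 < lucasU l (n + 1) := by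
  linarith [lucasU_nonneg hl n, lucasU_succ_sub_pos hl n]

theorem lucasU_succ_div_sq_le (hl : 1 < l) (n : ℕ) :
    lucasU l (n + 1) / (lucasU l (n + 1) - lucasU l n) ^ 2 ≤ (l + 1) / (l - 1) * l⁻¹ ^ n := by
  have h := sub_inv_pos hl
  have : 0 < l - 1 := by linarith
  calc lucasU l (n + 1) / (lucasU l (n + 1) - lucasU l n) ^ 2
      ≤ (l ^ (n + 1) / (l - l⁻¹)) / ((l - 1) * l ^ n / (l - l⁻¹)) ^ 2 := by
        have := le_lucasU_succ_sub hl n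
        have := lucasU_succ_le hl n
        gcongr
    _ = (l + 1) / (l - 1) * l⁻¹ ^ n := by
        rw [inv_pow]
        field_simp
        ring

theorem summable_lucasU_succ_div_sq (hl : 1 < l) :
    Summable fun n => lucasU l (n + 1) / (lucasU l (n + 1) - lucasU l n) ^ 2 :=
  ((summable_geometric_of_lt_one (by positivity) (inv_lt_one_of_one_lt₀ hl)).mul_left _
    ).of_nonneg_of_le (fun n => div_nonneg (lucasU_succ_pos hl n).le (sq_nonneg _))
      (lucasU_succ_div_sq_le hl)

theorem tsum_lucasU_succ_div_sq_le (hl : 1 < l) :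
    ∑' n, lucasU l (n + 1) / (lucasU l (n + 1) - lucasU l n) ^ 2 ≤ l * (l + 1) / (l - 1) ^ 2 := by
  have hgeom := summable_geometric_of_lt_one (by positivity) (inv_lt_one_of_one_lt₀ hl)
  calc ∑' n, lucasU l (n + 1) / (lucasU l (n + 1) - lucasU l n) ^ 2
      ≤ ∑' n, (l + 1) / (l - 1) * l⁻¹ ^ n :=
        (summable_lucasU_succ_div_sq hl).tsum_le_tsum (lucasU_succ_div_sq_le hl) (hgeom.mul_left _)
    _ = l * (l + 1) / (l - 1) ^ 2 := by
        have : l - 1 ≠ 0 := by linarith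
        rw [tsum_mul_left, tsum_geometric_of_lt_one (by positivity) (inv_lt_one_of_one_lt₀ hl)]
        field_simp

theorem lucasU_add_two_div (hl : 1 < l) (n : ℕ) :
    lucasU l (n + 2) / lucasU l (n + 1) = l + l⁻¹ - lucasU l n / lucasU l (n + 1) := by
  have := (lucasU_succ_pos hl n).ne'
  rw [lucasU_add_two (by positivity)]
  field_simp

end LucasU

theorem exists_one_lt_mul_add_inv_eq {r ε : ℝ} (hr : 0 < r) (hε : 0 < ε) :
    ∃ l, 1 < l ∧ r * (l + l⁻¹) = 2 * (r + ε) := by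
  set K := √(ε * (2 * r + ε))
  have hK : K ^ 2 = ε * (2 * r + ε) := sq_sqrt (by positivity)
  have hK₀ : 0 ≤ K := sqrt_nonneg _
  have hKlt : K < r + ε := by nlinarith
  refine ⟨(r + ε + K) / r, by rw [one_lt_div hr]; linarith, ?_⟩
  have hinv : ((r + ε + K) / r)⁻¹ = (r + ε - K) / r := by
    rw [inv_div, div_eq_div_iff (by positivity) hr.ne']
    linear_combination hK
  rw [hinv]
  field_simp
  ring

theorem lt_three_of_mul_add_inv_eq {r ε l : ℝ} (hr : 0 < r) (hl : 0 < l)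
    (hroot : r * (l + l⁻¹) = 2 * (r + ε)) (hε : ε / r < 1 / 2) : l < 3 := by
  have : 0 < l⁻¹ := inv_pos.2 hl
  have : ε < r / 2 := by rwa [div_lt_iff₀ hr, div_mul_eq_mul_div, one_mul] at hε
  nlinarith

section ImageCharges

variable {r ε l : ℝ} {c q : ℕ → ℝ}

theorem charge_succ_eq {ρ : ℕ → ℝ} (hc0 : c 0 = r + ε)
    (hρ : ∀ m, 1 ≤ m → ρ m = r / (c 0 + c (m - 1)))
    (hq : ∀ n, q n = ∏ m ∈ Finset.range (n + 1), ρ m) (n : ℕ) : q (n + 1) = q n * (r / (r + ε + c n)) := by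
  rw [hq, Finset.prod_range_succ, ← hq, hρ (n + 1) n.succ_pos, hc0, Nat.add_sub_cancel]

theorem image_charge_eq (hl : 1 < l) (hroot : r * (l + l⁻¹) = 2 * (r + ε)) (hc0 : c 0 = r + ε)
    (hc : ∀ n, c (n + 1) = r + ε - r ^ 2 / (r + ε + c n)) (n : ℕ) :
    c n = r + ε - r * (lucasU l n / lucasU l (n + 1)) := by
  induction n with
  | zero => simp [hc0]
  | succ n ih =>
    have hsum : r + ε + c n = r * (lucasU l (n + 2) / lucasU l (n + 1)) := by
      rw [ih, lucasU_add_two_div hl]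
      linear_combination -hroot
    have := (lucasU_succ_pos hl n).ne'
    have := (lucasU_succ_pos hl (n + 1)).ne'
    rw [hc, hsum]
    rcases eq_or_ne r 0 with rfl | hr
    · simp
    · field_simp

theorem charge_eq_inv_lucasU (hl : 1 < l) (hroot : r * (l + l⁻¹) = 2 * (r + ε))
    (hr : r ≠ 0) (hc0 : c 0 = r + ε) (hc : ∀ n, c (n + 1) = r + ε - r ^ 2 / (r + ε + c n))
    (hq0 : q 0 = 1) (hq : ∀ n, q (n + 1) = q n * (r / (r + ε + c n))) (n : ℕ) :
    q n = (lucasU l (n + 1))⁻¹ := by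
  induction n with
  | zero => simp [hq0, lucasU, (sub_inv_pos hl).ne']
  | succ n ih =>
    have hsum : r + ε + c n = r * (lucasU l (n + 2) / lucasU l (n + 1)) := by
      rw [image_charge_eq hl hroot hc0 hc, lucasU_add_two_div hl]
      linear_combination -hroot
    have := (lucasU_succ_pos hl n).ne'
    have := (lucasU_succ_pos hl (n + 1)).ne'
    rw [hq, ih, hsum]
    field_simp

theorem image_charge_sub_eq (hl : 1 < l) (hroot : r * (l + l⁻¹) = 2 * (r + ε))
    (hc0 : c 0 = r + ε) (hc : ∀ n, c (n + 1) = r + ε - r ^ 2 / (r + ε + c n)) (n : ℕ) :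
    c n - ε = r * ((lucasU l (n + 1) - lucasU l n) / lucasU l (n + 1)) := by
  have := (lucasU_succ_pos hl n).ne'
  rw [image_charge_eq hl hroot hc0 hc]
  field_simp
  ring

theorem lt_image_charge (hr : 0 < r) (hl : 1 < l) (hroot : r * (l + l⁻¹) = 2 * (r + ε))
    (hc0 : c 0 = r + ε) (hc : ∀ n, c (n + 1) = r + ε - r ^ 2 / (r + ε + c n)) (n : ℕ) :
    ε < c n := by
  have := image_charge_sub_eq hl hroot hc0 hc n
  have := div_pos (lucasU_succ_sub_pos hl n) (lucasU_succ_pos hl n)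
  nlinarith

theorem image_charge_le (hr : 0 < r) (hl : 1 < l) (hroot : r * (l + l⁻¹) = 2 * (r + ε))
    (hc0 : c 0 = r + ε) (hc : ∀ n, c (n + 1) = r + ε - r ^ 2 / (r + ε + c n)) (n : ℕ) :
    c n ≤ r + ε := by
  rw [image_charge_eq hl hroot hc0 hc n, sub_le_self_iff]
  exact mul_nonneg hr.le (div_nonneg (lucasU_nonneg hl n) (lucasU_succ_pos hl n).le)

theorem summable_charge_div_sq_and_tsum_le (hr : 0 < r) (hε : 0 < ε) (hl : 1 < l)
    (hroot : r * (l + l⁻¹) = 2 * (r + ε)) (hc0 : c 0 = r + ε)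
    (hc : ∀ n, c (n + 1) = r + ε - r ^ 2 / (r + ε + c n)) (hq0 : q 0 = 1)
    (hq : ∀ n, q (n + 1) = q n * (r / (r + ε + c n))) :
    Summable (fun n => q n / (c n - ε) ^ 2) ∧
      ∑' n, q n / (c n - ε) ^ 2 ≤ (l + 1) / (2 * r * ε) := by
  have hterm : (fun n => q n / (c n - ε) ^ 2) =
      fun n => (r ^ 2)⁻¹ * (lucasU l (n + 1) / (lucasU l (n + 1) - lucasU l n) ^ 2) := by
    ext n
    have := (lucasU_succ_pos hl n).ne'
    rw [charge_eq_inv_lucasU hl hroot hr.ne' hc0 hc hq0 hq, image_charge_sub_eq hl hroot hc0 hc]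
    field_simp
  have hε' : 2 * ε * l = r * (l - 1) ^ 2 := by
    have : l ≠ 0 := by positivity
    field_simp at hroot
    linear_combination -hroot
  rw [hterm]
  refine ⟨(summable_lucasU_succ_div_sq hl).mul_left _, ?_⟩
  rw [tsum_mul_left]
  calc (r ^ 2)⁻¹ * ∑' n, lucasU l (n + 1) / (lucasU l (n + 1) - lucasU l n) ^ 2
      ≤ (r ^ 2)⁻¹ * (l * (l + 1) / (l - 1) ^ 2) := by
        gcongr
        exact tsum_lucasU_succ_div_sq_le hl
    _ = (l + 1) / (2 * r * ε) := by
        have : l - 1 ≠ 0 := by linarith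
        field_simp
        linear_combination hε'

end ImageCharges

section ChargeDistance

variable {E : Type*} [NormedAddCommGroup E] [NormedSpace ℝ E] {e x : E} {r ε t : ℝ}

theorem sub_le_norm_sub_smul (he : ‖e‖ = 1) (ht : t ≤ r + ε) (hx : r < ‖x - (r + ε) • e‖) :
    t - ε ≤ ‖x - t • e‖ := by
  have hdiff : ‖t • e - (r + ε) • e‖ = r + ε - t := by
    rw [← sub_smul, norm_smul, he, mul_one, Real.norm_eq_abs, abs_of_nonpos (by linarith)]
    ring
  linarith [norm_sub_le_norm_sub_add_norm_sub x (t • e) ((r + ε) • e)]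

theorem sub_le_norm_sub_smul_and_norm_add_smul (he : ‖e‖ = 1) (hr : r ≠ 0) (ht : t ≤ r + ε)
    (hx : x ∉ closure (Metric.ball ((r + ε) • e) r ∪ Metric.ball (-((r + ε) • e)) r)) :
    t - ε ≤ ‖x - t • e‖ ∧ t - ε ≤ ‖x + t • e‖ := by
  simp only [closure_union, closure_ball _ hr, Set.mem_union, Metric.mem_closedBall, not_or,
    not_le, dist_eq_norm, sub_neg_eq_add] at hx
  refine ⟨sub_le_norm_sub_smul he ht hx.1, ?_⟩
  have := sub_le_norm_sub_smul (x := -x) he ht (by rw [← neg_add', norm_neg]; exact hx.2)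
  rwa [← neg_add', norm_neg] at this

end ChargeDistance

section PointCharge

variable {E : Type*} [NormedAddCommGroup E] {w d : ℕ → ℝ} {a : ℕ → E} {s : Set E} {x : E}

theorem summable_mul_inv_norm_sub (hd : ∀ n, 0 < d n)
    (hdist : ∀ n, d n ≤ ‖x - a n‖) (hw : Summable fun n => |w n| / d n) :
    Summable fun n => w n * ‖x - a n‖⁻¹ := by
  refine hw.of_norm_bounded fun n => ?_
  rw [norm_mul, norm_inv, norm_norm, Real.norm_eq_abs, ← div_eq_mul_inv]
  have := hd n
  gcongr
  exact hdist n

theorem tsum_dipole_eventuallyEq (hs : IsOpen s) (hd : ∀ n, 0 < d n)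
    (hdist_sub : ∀ n, ∀ y ∈ s, d n ≤ ‖y - a n‖) (hdist_add : ∀ n, ∀ y ∈ s, d n ≤ ‖y + a n‖)
    (hw : Summable fun n => |w n| / d n) (hx : x ∈ s) :
    (fun y => ∑' n, w n * (1 / ‖y - a n‖ - 1 / ‖y + a n‖)) =ᶠ[nhds x]
      fun y => ∑' n, w n * ‖y - a n‖⁻¹ - ∑' n, w n * ‖y - -a n‖⁻¹ := by
  filter_upwards [hs.mem_nhds hx] with y hy
  have hadd : ∀ n, d n ≤ ‖y - -a n‖ := fun n => by rw [sub_neg_eq_add]; exact hdist_add n y hy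
  rw [← (summable_mul_inv_norm_sub hd (fun n => hdist_sub n y hy) hw).tsum_sub
    (summable_mul_inv_norm_sub hd hadd hw)]
  congr 1 with n
  rw [sub_neg_eq_add, one_div, one_div, mul_sub]

variable [InnerProductSpace ℝ E]

theorem hasFDerivAt_inv_norm_sub {p z : E} (hz : z ≠ p) :
    HasFDerivAt (fun y => ‖y - p‖⁻¹) (-(‖z - p‖ ^ 3)⁻¹ • innerSL ℝ (z - p)) z := by
  have hpos : 0 < ‖z - p‖ := norm_pos_iff.2 (sub_ne_zero.2 hz)
  have hnorm : HasFDerivAt (fun y => ‖y - p‖) ((2 * ‖z - p‖)⁻¹ • 2 • innerSL ℝ (z - p)) z := by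
    simpa [sqrt_sq (norm_nonneg _)] using
      ((hasFDerivAt_id z).sub_const p).norm_sq.sqrt (by positivity)
  refine ((hasDerivAt_inv hpos.ne').comp_hasFDerivAt z hnorm).congr_fderiv ?_
  rw [smul_smul, ← Nat.cast_smul_eq_nsmul ℝ, smul_smul]
  congr 1
  field_simp
  norm_num

theorem norm_smul_inv_norm_cube_smul_innerSL_le {v : E} {k t : ℝ} (ht : 0 < t) (hv : t ≤ ‖v‖) :
    ‖k • (-(‖v‖ ^ 3)⁻¹) • innerSL ℝ v‖ ≤ |k| / t ^ 2 := by
  have hv₀ : 0 < ‖v‖ := ht.trans_le hv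
  rw [norm_smul, norm_smul, innerSL_apply_norm, norm_neg, norm_inv, norm_pow, norm_norm,
    Real.norm_eq_abs]
  calc |k| * ((‖v‖ ^ 3)⁻¹ * ‖v‖) = |k| / ‖v‖ ^ 2 := by field_simp
    _ ≤ |k| / t ^ 2 := by gcongr

theorem hasFDerivAt_tsum_mul_inv_norm_sub (hs : IsOpen s) (hd : ∀ n, 0 < d n)
    (hdist : ∀ n, ∀ y ∈ s, d n ≤ ‖y - a n‖) (hw₁ : Summable fun n => |w n| / d n)
    (hw₂ : Summable fun n => |w n| / d n ^ 2) (hx : x ∈ s) :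
    HasFDerivAt (fun y => ∑' n, w n * ‖y - a n‖⁻¹)
      (∑' n, w n • (-(‖x - a n‖ ^ 3)⁻¹) • innerSL ℝ (x - a n)) x := by
  obtain ⟨R, hR, hball⟩ := Metric.isOpen_iff.1 hs x hx
  have hne : ∀ n, ∀ y ∈ s, y ≠ a n := fun n y hy h => by
    have := hdist n y hy
    rw [h, sub_self, norm_zero] at this
    exact (hd n).not_ge this
  exact hasFDerivAt_tsum_of_isPreconnected hw₂ Metric.isOpen_ball
    (convex_ball x R).isPreconnected
    (fun n y hy => (hasFDerivAt_inv_norm_sub (hne n y (hball hy))).const_mul (w n))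
    (fun n y hy => norm_smul_inv_norm_cube_smul_innerSL_le (hd n) (hdist n y (hball hy)))
    (Metric.mem_ball_self hR)
    (summable_mul_inv_norm_sub hd (fun n => hdist n x hx) hw₁) (Metric.mem_ball_self hR)

theorem norm_fderiv_tsum_mul_inv_norm_sub_le (hs : IsOpen s) (hd : ∀ n, 0 < d n)
    (hdist : ∀ n, ∀ y ∈ s, d n ≤ ‖y - a n‖) (hw₁ : Summable fun n => |w n| / d n)
    (hw₂ : Summable fun n => |w n| / d n ^ 2) (hx : x ∈ s) :
    ‖fderiv ℝ (fun y => ∑' n, w n * ‖y - a n‖⁻¹) x‖ ≤ ∑' n, |w n| / d n ^ 2 := by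
  rw [(hasFDerivAt_tsum_mul_inv_norm_sub hs hd hdist hw₁ hw₂ hx).fderiv]
  exact tsum_of_norm_bounded hw₂.hasSum fun n =>
    norm_smul_inv_norm_cube_smul_innerSL_le (hd n) (hdist n x hx)

theorem differentiableAt_tsum_dipole (hs : IsOpen s) (hd : ∀ n, 0 < d n)
    (hdist_sub : ∀ n, ∀ y ∈ s, d n ≤ ‖y - a n‖) (hdist_add : ∀ n, ∀ y ∈ s, d n ≤ ‖y + a n‖)
    (hw₁ : Summable fun n => |w n| / d n) (hw₂ : Summable fun n => |w n| / d n ^ 2) (hx : x ∈ s) :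
    DifferentiableAt ℝ (fun y => ∑' n, w n * (1 / ‖y - a n‖ - 1 / ‖y + a n‖)) x := by
  have hdist_neg : ∀ n, ∀ y ∈ s, d n ≤ ‖y - -a n‖ := fun n y hy => by
    rw [sub_neg_eq_add]; exact hdist_add n y hy
  refine DifferentiableAt.congr_of_eventuallyEq ?_
    (tsum_dipole_eventuallyEq hs hd hdist_sub hdist_add hw₁ hx)
  exact ((hasFDerivAt_tsum_mul_inv_norm_sub hs hd hdist_sub hw₁ hw₂ hx).sub
    (hasFDerivAt_tsum_mul_inv_norm_sub hs hd hdist_neg hw₁ hw₂ hx)).differentiableAt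

theorem norm_fderiv_tsum_dipole_le (hs : IsOpen s) (hd : ∀ n, 0 < d n)
    (hdist_sub : ∀ n, ∀ y ∈ s, d n ≤ ‖y - a n‖) (hdist_add : ∀ n, ∀ y ∈ s, d n ≤ ‖y + a n‖)
    (hw₁ : Summable fun n => |w n| / d n) (hw₂ : Summable fun n => |w n| / d n ^ 2) (hx : x ∈ s) :
    ‖fderiv ℝ (fun y => ∑' n, w n * (1 / ‖y - a n‖ - 1 / ‖y + a n‖)) x‖ ≤
      2 * ∑' n, |w n| / d n ^ 2 := by
  have hdist_neg : ∀ n, ∀ y ∈ s, d n ≤ ‖y - -a n‖ := fun n y hy => by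
    rw [sub_neg_eq_add]; exact hdist_add n y hy
  rw [(tsum_dipole_eventuallyEq hs hd hdist_sub hdist_add hw₁ hx).fderiv_eq,
    fderiv_fun_sub (hasFDerivAt_tsum_mul_inv_norm_sub hs hd hdist_sub hw₁ hw₂ hx).differentiableAt
      (hasFDerivAt_tsum_mul_inv_norm_sub hs hd hdist_neg hw₁ hw₂ hx).differentiableAt, two_mul]
  exact (norm_sub_le _ _).trans (add_le_add
    (norm_fderiv_tsum_mul_inv_norm_sub_le hs hd hdist_sub hw₁ hw₂ hx)
    (norm_fderiv_tsum_mul_inv_norm_sub_le hs hd hdist_neg hw₁ hw₂ hx))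

end PointCharge

theorem summable_abs_div_of_summable_abs_div_sq {w d : ℕ → ℝ} {R : ℝ} (hd : ∀ n, 0 < d n)
    (hdR : ∀ n, d n ≤ R) (hw : Summable fun n => |w n| / d n ^ 2) :
    Summable fun n => |w n| / d n := by
  refine (hw.mul_left R).of_nonneg_of_le (fun n => div_nonneg (abs_nonneg _) (hd n).le) fun n => ?_
  have := hd n
  calc |w n| / d n = d n * (|w n| / d n ^ 2) := by field_simp
    _ ≤ R * (|w n| / d n ^ 2) := by gcongr; exact hdR n

section ImagePotential

variable {E : Type*} [NormedAddCommGroup E] [InnerProductSpace ℝ E] {e y : E} {r ε : ℝ}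

theorem norm_fderiv_image_potential_le {w c : ℕ → ℝ} (k : ℝ) (he : ‖e‖ = 1) (hr : 0 < r)
    (hc_gt : ∀ n, ε < c n) (hc_le : ∀ n, c n ≤ r + ε)
    (hw : Summable fun n => |w n| / (c n - ε) ^ 2)
    (hy : y ∉ closure (Metric.ball ((r + ε) • e) r ∪ Metric.ball (-((r + ε) • e)) r)) :
    ‖fderiv ℝ (fun x => k * ∑' n, w n * (1 / ‖x - c n • e‖ - 1 / ‖x + c n • e‖)) y‖ ≤
      2 * |k| * ∑' n, |w n| / (c n - ε) ^ 2 := by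
  set D := (closure (Metric.ball ((r + ε) • e) r ∪ Metric.ball (-((r + ε) • e)) r))ᶜ
  have hD : IsOpen D := isClosed_closure.isOpen_compl
  have hd : ∀ n, 0 < c n - ε := fun n => sub_pos.2 (hc_gt n)
  have hdist := fun n x (hx : x ∈ D) =>
    sub_le_norm_sub_smul_and_norm_add_smul he hr.ne' (hc_le n) hx
  have hw₁ := summable_abs_div_of_summable_abs_div_sq hd (fun n => by linarith [hc_le n]) hw
  rw [fderiv_const_mul (differentiableAt_tsum_dipole hD hd (fun n x hx => (hdist n x hx).1)
    (fun n x hx => (hdist n x hx).2) hw₁ hw hy), norm_smul, Real.norm_eq_abs, mul_assoc,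
    mul_left_comm]
  gcongr
  exact norm_fderiv_tsum_dipole_le hD hd (fun n x hx => (hdist n x hx).1)
    (fun n x hx => (hdist n x hx).2) hw₁ hw hy

end ImagePotential

theorem stmt_18 :
    ∃ C > (0:ℝ), ∃ δ₀ ∈ Set.Ioo (0:ℝ) 1,
      ∀ ε r : ℝ, 0 < ε → 0 < r →
      ∀ e₁ : EuclideanSpace ℝ (Fin 3), e₁ = EuclideanSpace.single 0 1 →
      ∀ c ρ q : ℕ → ℝ,
        c 0 = r + ε →
        (∀ n, c (n + 1) = r + ε - r ^ 2 / (r + ε + c n)) →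
        ρ 0 = 1 →
        (∀ m, 1 ≤ m → ρ m = r / (c 0 + c (m - 1))) →
        (∀ n, q n = ∏ m ∈ Finset.range (n + 1), ρ m) →
        Summable q →
      ∀ Q : ℝ, Q = ∑' n, q n →
      ∀ h₀ : EuclideanSpace ℝ (Fin 3) → ℝ,
        (∀ x, h₀ x = -(1 / (4 * Real.pi * Q)) *
          ∑' n, q n * (1 / ‖x - c n • e₁‖ - 1 / ‖x + c n • e₁‖)) →
        (∀ x ∉ closure (Metric.ball ((r + ε) • e₁) r ∪ Metric.ball (-((r + ε) • e₁)) r),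
          ‖fderiv ℝ h₀ x‖ ≤ 1 / (2 * Real.pi * Q) * ∑' n, q n / (c n - ε) ^ 2) ∧
        (ε / r < δ₀ →
          ∀ x ∉ closure (Metric.ball ((r + ε) • e₁) r ∪ Metric.ball (-((r + ε) • e₁)) r),
            ‖fderiv ℝ h₀ x‖ ≤ C / (Q * r * ε)) := by
  refine ⟨1, one_pos, 1 / 2, ⟨by norm_num, by norm_num⟩, ?_⟩
  intro ε r hε hr e₁ he₁ c ρ q hc0 hc hρ0 hρ hq hq_sum Q hQ h₀ hh₀
  obtain ⟨l, hl, hroot⟩ := exists_one_lt_mul_add_inv_eq hr hε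
  have hq0 : q 0 = 1 := by simp [hq, hρ0]
  have hq_succ := charge_succ_eq hc0 hρ hq
  have habs : ∀ n, |q n| = q n := fun n => abs_of_pos <| by
    rw [charge_eq_inv_lucasU hl hroot hr.ne' hc0 hc hq0 hq_succ]
    exact inv_pos.2 (lucasU_succ_pos hl n)
  have hQ1 : 1 ≤ Q := hQ ▸ hq0 ▸ hq_sum.le_tsum 0 fun n _ => habs n ▸ abs_nonneg _
  obtain ⟨hsum, htsum⟩ := summable_charge_div_sq_and_tsum_le hr hε hl hroot hc0 hc hq0 hq_succ
  have hgrad : ∀ x ∉ closure (Metric.ball ((r + ε) • e₁) r ∪ Metric.ball (-((r + ε) • e₁)) r),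
      ‖fderiv ℝ h₀ x‖ ≤ 1 / (2 * π * Q) * ∑' n, q n / (c n - ε) ^ 2 := fun x hx => by
    have := norm_fderiv_image_potential_le (w := q) (-(1 / (4 * π * Q))) (by rw [he₁]; simp) hr
      (lt_image_charge hr hl hroot hc0 hc) (image_charge_le hr hl hroot hc0 hc)
      (by simpa only [habs] using hsum) hx
    rw [funext hh₀]
    convert this using 1
    simp only [habs, abs_neg, abs_of_pos (by positivity : 0 < 1 / (4 * π * Q))]
    field_simp
    ring
  refine ⟨hgrad, fun hδ x hx => (hgrad x hx).trans ?_⟩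
  have hl3 := lt_three_of_mul_add_inv_eq hr (by linarith) hroot hδ
  calc 1 / (2 * π * Q) * ∑' n, q n / (c n - ε) ^ 2
      ≤ 1 / (2 * π * Q) * ((l + 1) / (2 * r * ε)) := by gcongr
    _ ≤ 1 / (Q * r * ε) := by
      rw [div_mul_div_comm, div_le_div_iff₀ (by positivity) (by positivity)]
      nlinarith [pi_gt_three, mul_pos (mul_pos (zero_lt_one.trans_le hQ1) hr) hε]
end

section
/- Let ε, r > 0 with δ := ε/r, e₁ = (1,0,0) ∈ ℝ³, and define (c_n) by c₀ = r+ε, c_{n+1} = r+ε − r²/(r+ε+c_n); let ρ₀ := 1, ρ_m := r/(c₀+c_{m−1}) for m ≥ 1, q_n := ∏_{m=0}^n ρ_m, Q := Σ_{n=0}^∞ q_n, and h₀(x) := −(1/(4πQ))·Σ_{n=0}^∞ q_n·(1/|x − c_n e₁| − 1/|x + c_n e₁|). Then there exist c₀' > 0 and δ₀ ∈ (0,1) such that for all δ ∈ (0,δ₀): |h₀(εe₁) − h₀(−εe₁)| ≥ c₀'/(Q·r), and consequently there exists a point t ∈ (−ε, ε) (lying on the open segment between the two balls, hence outside B̄₁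 ∪ B̄₂) with |∂_{x₁} h₀(t,0,0)| ≥ c₀'/(2·Q·r·ε). In particular sup_{x ∉ B̄₁∪B̄₂} |∇h₀(x)| ≥ c₀'/(2Qrε), matching the upper bound up to constants. -/
/-!
Write `b² = ε² + 2rε`, so that `±b e₁` are the two points that are mutually inverse with respect
to both spheres, and `l = (b - ε)/(b + ε)`; then `r = 2bl/(1 - l²)` and `ε = b(1 - l)/(1 + l)`,
and the recursions are solved by `c n = b(1 + l^(2n+2))/(1 - l^(2n+2))` and
`q n = lⁿ(1 - l²)/(1 - l^(2n+2))`.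
Since `h₀` is odd, the gap `h₀(εe₁) - h₀(-εe₁)` is `-2/(4πQ)` times `∑ q n (1/(c n - ε) - 1/(c n + ε))`,
and the closed forms bound the `n`-th term below by `(1 - l²) lⁿ (1 - l^(n+1)) / (4r)`, a series
summing to `1/(4r)`: the gap is at least `1/(8πQr)`.
All charges `c n e₁` lie at distance `≥ b` from the origin, so on the ball of radius `(ε + b)/2`
the series may be differentiated termwise, and the mean value theorem on the segment
`[-εe₁, εe₁]` turns the gap into the gradient bound with `c₀ = 1/(8π)`.
-/

open Real Set Metric

section Segment

variable {E : Type*} [NormedAddCommGroup E] [NormedSpace ℝ E]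

theorem smul_notMem_closure_union_ball {e : E} (he : ‖e‖ = 1) {r ε t : ℝ} (hr : 0 < r)
    (ht : t ∈ Ioo (-ε) ε) : t • e ∉ closure (ball ((r + ε) • e) r ∪ ball (-((r + ε) • e)) r) := by
  have hnorm : ∀ s : ℝ, ‖s • e‖ = |s| := fun s ↦ by rw [norm_smul, he, mul_one, Real.norm_eq_abs]
  rw [closure_union, closure_ball _ hr.ne', closure_ball _ hr.ne']
  rintro (h | h) <;> rw [mem_closedBall, dist_eq_norm] at h
  · rw [← sub_smul, hnorm, abs_of_neg (by linarith [ht.2])] at h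
    linarith [ht.2]
  · rw [sub_neg_eq_add, ← add_smul, hnorm, abs_of_pos (by linarith [ht.1])] at h
    linarith [ht.1]

theorem exists_fderiv_smul_eq_slope {f : E → ℝ} {v : E} {a b : ℝ} (hab : a < b)
    (hf : ∀ t ∈ Icc a b, DifferentiableAt ℝ f (t • v)) :
    ∃ t ∈ Ioo a b, fderiv ℝ f (t • v) v = (f (b • v) - f (a • v)) / (b - a) := by
  have hderiv : ∀ t ∈ Icc a b, HasDerivAt (fun s : ℝ ↦ f (s • v)) (fderiv ℝ f (t • v) v) t :=
    fun t ht ↦ (hf t ht).hasFDerivAt.comp_hasDerivAt t (by simpa using (hasDerivAt_id t).smul_const v)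
  exact exists_hasDerivAt_eq_slope _ _ hab
    (fun t ht ↦ (hderiv t ht).continuousAt.continuousWithinAt)
    (fun t ht ↦ hderiv t (Ioo_subset_Icc_self ht))

end Segment

section Dipole

variable {E : Type*} [NormedAddCommGroup E]

noncomputable def dipole (a x : E) : ℝ := 1 / ‖x - a‖ - 1 / ‖x + a‖

theorem dipole_zero_right (a : E) : dipole a 0 = 0 := by
  simp [dipole]

theorem dipole_neg_right (a x : E) : dipole a (-x) = -dipole a x := by
  rw [dipole, dipole, ← norm_neg (-x - a), ← norm_neg (-x + a)]
  simp only [neg_sub, sub_neg_eq_add, neg_add_rev, neg_neg]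
  rw [add_comm a x, add_comm (-a) x, ← sub_eq_add_neg]

theorem abs_one_div_norm_sub_sub_le {a x y : E} {d : ℝ} (hd : 0 < d) (hx : d ≤ ‖x - a‖)
    (hy : d ≤ ‖y - a‖) : |1 / ‖y - a‖ - 1 / ‖x - a‖| ≤ ‖y - x‖ / d ^ 2 := by
  have hx0 : 0 < ‖x - a‖ := hd.trans_le hx
  have hy0 : 0 < ‖y - a‖ := hd.trans_le hy
  have hnum : |‖x - a‖ - ‖y - a‖| ≤ ‖y - x‖ := by
    simpa [norm_sub_rev x y] using abs_norm_sub_norm_le (x - a) (y - a)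
  rw [div_sub_div _ _ hy0.ne' hx0.ne', abs_div, abs_of_pos (mul_pos hy0 hx0)]
  simp only [one_mul, mul_one]
  exact div_le_div₀ (norm_nonneg _) hnum (by positivity) (by nlinarith)

theorem abs_dipole_sub_le_of_mem_ball {a x y : E} {R b : ℝ} (hx : x ∈ ball 0 R)
    (hy : y ∈ ball 0 R) (hRb : R < b) (ha : b ≤ ‖a‖) :
    |dipole a y - dipole a x| ≤ 2 / (b - R) ^ 2 * ‖y - x‖ := by
  have hfar : ∀ z ∈ ball (0 : E) R, b - R ≤ ‖z - a‖ ∧ b - R ≤ ‖z - -a‖ := by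
    intro z hz
    rw [mem_ball_zero_iff] at hz
    refine ⟨?_, ?_⟩
    · linarith [norm_sub_norm_le a z, norm_sub_rev a z]
    · linarith [norm_sub_norm_le (-a) z, norm_sub_rev (-a) z, norm_neg a]
  obtain ⟨hx₁, hx₂⟩ := hfar x hx
  obtain ⟨hy₁, hy₂⟩ := hfar y hy
  have hd : 0 < b - R := by linarith
  have h₁ := abs_one_div_norm_sub_sub_le hd hx₁ hy₁
  have h₂ := abs_one_div_norm_sub_sub_le hd hx₂ hy₂
  simp only [sub_neg_eq_add] at h₂
  calc |dipole a y - dipole a x|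
      = |(1 / ‖y - a‖ - 1 / ‖x - a‖) - (1 / ‖y + a‖ - 1 / ‖x + a‖)| := by
        rw [dipole, dipole]; ring_nf
    _ ≤ ‖y - x‖ / (b - R) ^ 2 + ‖y - x‖ / (b - R) ^ 2 := (abs_sub _ _).trans (add_le_add h₁ h₂)
    _ = 2 / (b - R) ^ 2 * ‖y - x‖ := by ring

variable [NormedSpace ℝ E]

theorem norm_fderiv_const_mul_dipole_le {a x : E} {q R b : ℝ} (hx : x ∈ ball 0 R) (hRb : R < b)
    (ha : b ≤ ‖a‖) : ‖fderiv ℝ (fun y ↦ q * dipole a y) x‖ ≤ |q| * (2 / (b - R) ^ 2) := by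
  refine norm_fderiv_le_of_lip' ℝ (by positivity) ?_
  filter_upwards [isOpen_ball.mem_nhds hx] with y hy
  rw [← mul_sub, norm_mul, Real.norm_eq_abs, Real.norm_eq_abs, mul_assoc]
  exact mul_le_mul_of_nonneg_left (abs_dipole_sub_le_of_mem_ball hx hy hRb ha) (abs_nonneg q)

theorem dipole_smul_smul {e : E} (he : ‖e‖ = 1) {c t : ℝ} (ht : |t| < c) :
    dipole (c • e) (t • e) = 1 / (c - t) - 1 / (c + t) := by
  have hnorm : ∀ s : ℝ, ‖s • e‖ = |s| := fun s ↦ by rw [norm_smul, he, mul_one, Real.norm_eq_abs]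
  rw [abs_lt] at ht
  rw [dipole, ← sub_smul, ← add_smul, hnorm, hnorm, abs_of_neg (by linarith), abs_of_pos (by linarith)]
  ring_nf

variable {F : Type*} [NormedAddCommGroup F] [InnerProductSpace ℝ F]

theorem differentiableAt_dipole {a x : F} (h₁ : x ≠ a) (h₂ : x ≠ -a) :
    DifferentiableAt ℝ (dipole a) x := by
  have d₁ : DifferentiableAt ℝ (fun y : F ↦ ‖y - a‖) x :=
    (differentiableAt_id.sub_const a).norm ℝ (sub_ne_zero.2 h₁)
  have d₂ : DifferentiableAt ℝ (fun y : F ↦ ‖y + a‖) x :=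
    (differentiableAt_id.add_const a).norm ℝ (by rwa [← sub_neg_eq_add, sub_ne_zero])
  unfold dipole
  simp only [one_div]
  exact (d₁.inv (norm_ne_zero_iff.2 (sub_ne_zero.2 h₁))).sub
    (d₂.inv (norm_ne_zero_iff.2 (by rwa [← sub_neg_eq_add, sub_ne_zero])))

theorem summable_and_differentiableAt_tsum_dipole {q : ℕ → ℝ} {a : ℕ → F} {R b : ℝ}
    (hq : Summable q) (hRb : R < b) (ha : ∀ n, b ≤ ‖a n‖) {x : F} (hx : x ∈ ball 0 R) :
    (Summable fun n ↦ q n * dipole (a n) x) ∧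
      DifferentiableAt ℝ (fun y ↦ ∑' n, q n * dipole (a n) y) x := by
  have hdiff : ∀ n, ∀ y ∈ ball (0 : F) R, DifferentiableAt ℝ (fun z ↦ q n * dipole (a n) z) y := by
    intro n y hy
    have hy' : ‖y‖ < ‖a n‖ := (mem_ball_zero_iff.1 hy).trans_le (hRb.le.trans (ha n))
    refine (differentiableAt_dipole ?_ ?_).const_mul (q n) <;> rintro rfl
    · exact hy'.false
    · rw [norm_neg] at hy'
      exact hy'.false
  have h0 : (0 : F) ∈ ball 0 R := mem_ball_self (pos_of_mem_ball hx)
  have hsum0 : Summable fun n ↦ q n * dipole (a n) (0 : F) := by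
    simp only [dipole_zero_right, mul_zero, summable_zero]
  have hu : Summable fun n ↦ |q n| * (2 / (b - R) ^ 2) := hq.abs.mul_right _
  have hf : ∀ n, ∀ y ∈ ball (0 : F) R,
      HasFDerivAt (fun z ↦ q n * dipole (a n) z) (fderiv ℝ (fun z ↦ q n * dipole (a n) z) y) y :=
    fun n y hy ↦ (hdiff n y hy).hasFDerivAt
  have hf' : ∀ n, ∀ y ∈ ball (0 : F) R,
      ‖fderiv ℝ (fun z ↦ q n * dipole (a n) z) y‖ ≤ |q n| * (2 / (b - R) ^ 2) :=
    fun n y hy ↦ norm_fderiv_const_mul_dipole_le hy hRb (ha n)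
  have hconn : IsPreconnected (ball (0 : F) R) := (convex_ball 0 R).isPreconnected
  exact ⟨summable_of_summable_hasFDerivAt_of_isPreconnected (𝕜 := ℝ)
      (f := fun n z ↦ q n * dipole (a n) z) hu isOpen_ball hconn hf hf' h0 hsum0 hx,
    (hasFDerivAt_tsum_of_isPreconnected (𝕜 := ℝ) (f := fun n z ↦ q n * dipole (a n) z)
      hu isOpen_ball hconn hf hf' h0 hsum0 hx).differentiableAt⟩

end Dipole

section ImageCharges

variable {b l r ε : ℝ}

theorem exists_bispherical_params (hε : 0 < ε) (hr : 0 < r) :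
    ∃ b l : ℝ, 0 < b ∧ ε < b ∧ 0 < l ∧ l < 1 ∧
      r = 2 * b * l / (1 - l ^ 2) ∧ ε = b * (1 - l) / (1 + l) := by
  have hpos : 0 < ε ^ 2 + 2 * r * ε := by positivity
  obtain ⟨b, hb, hb2⟩ : ∃ b, 0 < b ∧ b ^ 2 = ε ^ 2 + 2 * r * ε :=
    ⟨√(ε ^ 2 + 2 * r * ε), sqrt_pos.2 hpos, sq_sqrt hpos.le⟩
  have hεb : ε < b := by nlinarith
  refine ⟨b, (b - ε) / (b + ε), hb, hεb, div_pos (by linarith) (by linarith),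
    (div_lt_one (by linarith)).2 (by linarith), ?_, ?_⟩
  · have hden : 1 - ((b - ε) / (b + ε)) ^ 2 = 4 * b * ε / (b + ε) ^ 2 := by
      field_simp; ring
    rw [hden]
    field_simp
    nlinarith
  · field_simp [hb.ne']
    ring

theorem mul_one_add_div_one_sub_add {K K' : ℝ} (hK : K ≠ 1) (hK' : K' ≠ 1) :
    b * (1 + K) / (1 - K) + b * (1 + K') / (1 - K') = 2 * b * (1 - K * K') / ((1 - K) * (1 - K')) := by
  rw [div_add_div _ _ (sub_ne_zero.2 hK.symm) (sub_ne_zero.2 hK'.symm)]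
  ring

theorem imageCharge_eq (hb : 0 < b) (hl0 : 0 < l) (hl1 : l < 1)
    (hr : r = 2 * b * l / (1 - l ^ 2)) (hε : ε = b * (1 - l) / (1 + l)) {c : ℕ → ℝ}
    (hc0 : c 0 = r + ε) (hcs : ∀ n, c (n + 1) = r + ε - r ^ 2 / (r + ε + c n)) (n : ℕ) :
    c n = b * (1 + l ^ (2 * n + 2)) / (1 - l ^ (2 * n + 2)) := by
  have hl2 : l ^ 2 < 1 := pow_lt_one₀ hl0.le hl1 two_ne_zero
  have hrε : r + ε = b * (1 + l ^ 2) / (1 - l ^ 2) := by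
    rw [hr, hε]
    field_simp [(sub_pos.2 hl2).ne', (by linarith : 1 + l ≠ 0)]
    ring
  induction n with
  | zero => simpa [hrε] using hc0
  | succ n ih =>
    have hK : l ^ (2 * n + 2) < 1 := pow_lt_one₀ hl0.le hl1 (by omega)
    have hK' : l ^ 2 * l ^ (2 * n + 2) < 1 := by nlinarith [pow_pos hl0 (2 * n + 2)]
    rw [hcs, ih, hrε, mul_one_add_div_one_sub_add hl2.ne hK.ne, hr,
      show 2 * (n + 1) + 2 = 2 + (2 * n + 2) by ring, pow_add l 2]
    generalize l ^ (2 * n + 2) = K at hK hK' ⊢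
    field_simp [(sub_pos.2 hl2).ne', (sub_pos.2 hK).ne', (sub_pos.2 hK').ne', hb.ne']
    ring

theorem imageWeight_eq (hb : 0 < b) (hl0 : 0 < l) (hl1 : l < 1)
    (hr : r = 2 * b * l / (1 - l ^ 2)) {c ρ q : ℕ → ℝ}
    (hc : ∀ n, c n = b * (1 + l ^ (2 * n + 2)) / (1 - l ^ (2 * n + 2)))
    (hρ0 : ρ 0 = 1) (hρ : ∀ m, 1 ≤ m → ρ m = r / (c 0 + c (m - 1)))
    (hq : ∀ n, q n = ∏ m ∈ Finset.range (n + 1), ρ m) (n : ℕ) :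
    q n = l ^ n * (1 - l ^ 2) / (1 - l ^ (2 * n + 2)) := by
  have hl2 : l ^ 2 < 1 := pow_lt_one₀ hl0.le hl1 two_ne_zero
  induction n with
  | zero => simp [hq, hρ0, (sub_pos.2 hl2).ne']
  | succ n ih =>
    have hK : l ^ (2 * n + 2) < 1 := pow_lt_one₀ hl0.le hl1 (by omega)
    have hK' : l ^ 2 * l ^ (2 * n + 2) < 1 := by nlinarith [pow_pos hl0 (2 * n + 2)]
    rw [hq, Finset.prod_range_succ, ← hq, ih, hρ (n + 1) le_add_self, Nat.add_sub_cancel, hc, hc,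
      mul_one_add_div_one_sub_add hl2.ne hK.ne, hr,
      show 2 * (n + 1) + 2 = 2 + (2 * n + 2) by ring, pow_add l 2]
    generalize l ^ (2 * n + 2) = K at hK hK' ⊢
    field_simp [(sub_pos.2 hl2).ne', (sub_pos.2 hK).ne', (sub_pos.2 hK').ne', hb.ne']
    ring

theorem pow_mul_one_sub_pow_succ_le_imageTerm (hb : 0 < b) (hl0 : 0 < l) (hl1 : l < 1)
    (hr : r = 2 * b * l / (1 - l ^ 2)) (hε : ε = b * (1 - l) / (1 + l)) {c q : ℕ → ℝ}
    (hc : ∀ n, c n = b * (1 + l ^ (2 * n + 2)) / (1 - l ^ (2 * n + 2)))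
    (hq : ∀ n, q n = l ^ n * (1 - l ^ 2) / (1 - l ^ (2 * n + 2))) (n : ℕ) :
    (1 - l ^ 2) * (l ^ n * (1 - l ^ (n + 1))) / 4 ≤
      r * (q n * (1 / (c n - ε) - 1 / (c n + ε))) := by
  have hl2 : 0 < 1 - l ^ 2 := sub_pos.2 (pow_lt_one₀ hl0.le hl1 two_ne_zero)
  have hp0 : 0 < l ^ (n + 1) := pow_pos hl0 _
  have hpl : l ^ (n + 1) ≤ l := pow_le_of_le_one hl0.le hl1.le (by omega)
  rw [hc, hq, show 2 * n + 2 = (n + 1) * 2 by ring, pow_mul]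
  generalize l ^ (n + 1) = p at hp0 hpl
  have hp2 : 0 < 1 - p ^ 2 := by nlinarith
  have hsub : b * (1 + p ^ 2) / (1 - p ^ 2) - ε = 2 * b * (p ^ 2 + l) / ((1 - p ^ 2) * (1 + l)) := by
    rw [hε]; field_simp [hp2.ne', (by linarith : 1 + l ≠ 0)]; ring
  have hadd : b * (1 + p ^ 2) / (1 - p ^ 2) + ε = 2 * b * (1 + l * p ^ 2) / ((1 - p ^ 2) * (1 + l)) := by
    rw [hε]; field_simp [hp2.ne', (by linarith : 1 + l ≠ 0)]; ring
  have key : r * (l ^ n * (1 - l ^ 2) / (1 - p ^ 2) *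
      (1 / (2 * b * (p ^ 2 + l) / ((1 - p ^ 2) * (1 + l))) -
        1 / (2 * b * (1 + l * p ^ 2) / ((1 - p ^ 2) * (1 + l))))) =
      (1 - l ^ 2) * (l ^ n * (l * (1 - p ^ 2) / ((p ^ 2 + l) * (1 + l * p ^ 2)))) := by
    rw [hr]
    field_simp [hl2.ne', hp2.ne', hb.ne', (by positivity : p ^ 2 + l ≠ 0),
      (by positivity : 1 + l * p ^ 2 ≠ 0), (by linarith : 1 + l ≠ 0)]
    ring
  rw [hsub, hadd, key, mul_div_assoc, mul_div_assoc]
  refine mul_le_mul_of_nonneg_left (mul_le_mul_of_nonneg_left ?_ (pow_pos hl0 n).le) hl2.le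
  rw [le_div_iff₀ (by positivity)]
  have h₁ : p ^ 2 + l ≤ 2 * l := by nlinarith
  have h₂ : 1 + l * p ^ 2 ≤ 2 := by nlinarith
  have hden : (p ^ 2 + l) * (1 + l * p ^ 2) ≤ 4 * l := by nlinarith
  nlinarith

theorem hasSum_pow_mul_one_sub_pow_succ (hl0 : 0 < l) (hl1 : l < 1) :
    HasSum (fun n : ℕ ↦ l ^ n * (1 - l ^ (n + 1))) (1 - l ^ 2)⁻¹ := by
  have hl2 : l ^ 2 < 1 := pow_lt_one₀ hl0.le hl1 two_ne_zero
  have h₁ : 1 - l ≠ 0 := (sub_pos.2 hl1).ne'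
  have h₂ : 1 - l ^ 2 ≠ 0 := (sub_pos.2 hl2).ne'
  have hsum : (1 - l ^ 2)⁻¹ = (1 - l)⁻¹ - l * (1 - l ^ 2)⁻¹ := by
    field_simp
    ring
  rw [hsum, show (fun n : ℕ ↦ l ^ n * (1 - l ^ (n + 1))) = fun n ↦ l ^ n - l * (l ^ 2) ^ n by
    ext n; ring]
  exact (hasSum_geometric_of_lt_one hl0.le hl1).sub
    ((hasSum_geometric_of_lt_one (by positivity) hl2).mul_left _)

theorem one_div_four_mul_le_tsum_imageTerm (hb : 0 < b) (hl0 : 0 < l) (hl1 : l < 1)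
    (hr : r = 2 * b * l / (1 - l ^ 2)) (hε : ε = b * (1 - l) / (1 + l)) {c q : ℕ → ℝ}
    (hc : ∀ n, c n = b * (1 + l ^ (2 * n + 2)) / (1 - l ^ (2 * n + 2)))
    (hq : ∀ n, q n = l ^ n * (1 - l ^ 2) / (1 - l ^ (2 * n + 2)))
    (hsum : Summable fun n ↦ q n * (1 / (c n - ε) - 1 / (c n + ε))) :
    1 / (4 * r) ≤ ∑' n, q n * (1 / (c n - ε) - 1 / (c n + ε)) := by
  have hrpos : 0 < r := by
    rw [hr]; exact div_pos (by positivity) (sub_pos.2 (pow_lt_one₀ hl0.le hl1 two_ne_zero))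
  have hl2 : 0 < 1 - l ^ 2 := sub_pos.2 (pow_lt_one₀ hl0.le hl1 two_ne_zero)
  have hweight := ((hasSum_pow_mul_one_sub_pow_succ hl0 hl1).mul_left ((1 - l ^ 2) / 4)).div_const r
  rw [show (1 - l ^ 2) / 4 * (1 - l ^ 2)⁻¹ / r = 1 / (4 * r) by field_simp] at hweight
  refine hasSum_le (fun n ↦ ?_) hweight hsum.hasSum
  rw [div_le_iff₀' hrpos, ← mul_div_right_comm]
  exact pow_mul_one_sub_pow_succ_le_imageTerm hb hl0 hl1 hr hε hc hq n

theorem le_imageCharge (hb : 0 ≤ b) (hl0 : 0 < l) (hl1 : l < 1) {c : ℕ → ℝ}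
    (hc : ∀ n, c n = b * (1 + l ^ (2 * n + 2)) / (1 - l ^ (2 * n + 2))) (n : ℕ) : b ≤ c n := by
  have hK : l ^ (2 * n + 2) < 1 := pow_lt_one₀ hl0.le hl1 (by omega)
  rw [hc, le_div_iff₀ (sub_pos.2 hK)]
  nlinarith [pow_pos hl0 (2 * n + 2)]

theorem one_le_tsum_imageWeight (hl0 : 0 < l) (hl1 : l < 1) {q : ℕ → ℝ}
    (hq : ∀ n, q n = l ^ n * (1 - l ^ 2) / (1 - l ^ (2 * n + 2))) (hsum : Summable q) :
    1 ≤ ∑' n, q n := by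
  have hl2 : 0 < 1 - l ^ 2 := sub_pos.2 (pow_lt_one₀ hl0.le hl1 two_ne_zero)
  have hpos : ∀ n, 0 ≤ q n := fun n ↦ by
    rw [hq]
    exact div_nonneg (by positivity) (sub_pos.2 (pow_lt_one₀ hl0.le hl1 (by omega))).le
  calc (1 : ℝ) = q 0 := by rw [hq]; simp [hl2.ne']
    _ ≤ ∑' n, q n := hsum.le_tsum 0 fun n _ ↦ hpos n

end ImageCharges

section Potential

variable {E : Type*} [NormedAddCommGroup E]

theorem tsum_dipole_neg (q : ℕ → ℝ) (a : ℕ → E) (x : E) :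
    ∑' n, q n * dipole (a n) (-x) = -∑' n, q n * dipole (a n) x := by
  simp only [dipole_neg_right, mul_neg, tsum_neg]

variable [NormedSpace ℝ E]

theorem one_div_four_mul_le_tsum_dipole {e : E} (he : ‖e‖ = 1) {b l r ε : ℝ} (hε0 : 0 < ε) (hεb : ε < b) (hl0 : 0 < l) (hl1 : l < 1) (hr : r = 2 * b * l / (1 - l ^ 2))
    (hε : ε = b * (1 - l) / (1 + l)) {c q : ℕ → ℝ}
    (hc : ∀ n, c n = b * (1 + l ^ (2 * n + 2)) / (1 - l ^ (2 * n + 2)))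
    (hq : ∀ n, q n = l ^ n * (1 - l ^ 2) / (1 - l ^ (2 * n + 2)))
    (hsum : Summable fun n ↦ q n * dipole (c n • e) (ε • e)) :
    1 / (4 * r) ≤ ∑' n, q n * dipole (c n • e) (ε • e) := by
  have hb : 0 < b := hε0.trans hεb
  have hterm : ∀ n, dipole (c n • e) (ε • e) = 1 / (c n - ε) - 1 / (c n + ε) := fun n ↦
    dipole_smul_smul he ((abs_of_pos hε0).trans_lt (hεb.trans_le (le_imageCharge hb.le hl0 hl1 hc n)))
  simp only [hterm] at hsum ⊢
  exact one_div_four_mul_le_tsum_imageTerm hb hl0 hl1 hr hε hc hq hsum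

variable {F : Type*} [NormedAddCommGroup F] [InnerProductSpace ℝ F]

theorem summable_and_differentiableAt_tsum_dipole_smul {e : F} (he : ‖e‖ = 1) {q c : ℕ → ℝ}
    {b ε t : ℝ} (hq : Summable q) (hεb : ε < b) (hc : ∀ n, b ≤ c n) (ht : t ∈ Icc (-ε) ε) :
    (Summable fun n ↦ q n * dipole (c n • e) (t • e)) ∧
      DifferentiableAt ℝ (fun y ↦ ∑' n, q n * dipole (c n • e) y) (t • e) := by
  have hnorm : ∀ s : ℝ, ‖s • e‖ = |s| := fun s ↦ by rw [norm_smul, he, mul_one, Real.norm_eq_abs]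
  refine summable_and_differentiableAt_tsum_dipole hq (by linarith : (ε + b) / 2 < b)
    (fun n ↦ hnorm (c n) ▸ (hc n).trans (le_abs_self _)) ?_
  rw [mem_ball_zero_iff, hnorm, abs_lt]
  constructor <;> linarith [ht.1, ht.2]

end Potential

theorem stmt_19 :
    ∃ c₀ > (0:ℝ), ∃ δ₀ ∈ Set.Ioo (0:ℝ) 1,
      ∀ ε r : ℝ, 0 < ε → 0 < r → ε / r < δ₀ →
      ∀ e₁ : EuclideanSpace ℝ (Fin 3), e₁ = EuclideanSpace.single 0 1 →
      ∀ c ρ q : ℕ → ℝ,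
        c 0 = r + ε →
        (∀ n, c (n + 1) = r + ε - r ^ 2 / (r + ε + c n)) →
        ρ 0 = 1 →
        (∀ m, 1 ≤ m → ρ m = r / (c 0 + c (m - 1))) →
        (∀ n, q n = ∏ m ∈ Finset.range (n + 1), ρ m) →
        Summable q →
      ∀ Q : ℝ, Q = ∑' n, q n →
      ∀ h₀ : EuclideanSpace ℝ (Fin 3) → ℝ,
        (∀ x, h₀ x = -(1 / (4 * Real.pi * Q)) *
          ∑' n, q n * (1 / ‖x - c n • e₁‖ - 1 / ‖x + c n • e₁‖)) →
        c₀ / (Q * r) ≤ |h₀ (ε • e₁) - h₀ (-(ε • e₁))| ∧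
        (∃ t ∈ Set.Ioo (-ε) ε,
          t • e₁ ∉ closure (Metric.ball ((r + ε) • e₁) r ∪ Metric.ball (-((r + ε) • e₁)) r) ∧
          c₀ / (2 * Q * r * ε) ≤ |fderiv ℝ h₀ (t • e₁) e₁|) ∧
        (∃ x ∉ closure (Metric.ball ((r + ε) • e₁) r ∪ Metric.ball (-((r + ε) • e₁)) r),
          c₀ / (2 * Q * r * ε) ≤ ‖fderiv ℝ h₀ x‖) := by
  refine ⟨1 / (8 * π), by positivity, 1 / 2, by norm_num, ?_⟩
  intro ε r hε hr _ e₁ he₁ c ρ q hc0 hcs hρ0 hρ hq hsum Q hQ h₀ hh₀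
  have he : ‖e₁‖ = 1 := by rw [he₁, PiLp.norm_single, norm_one]
  obtain ⟨b, l, hb, hεb, hl0, hl1, hrbl, hεbl⟩ := exists_bispherical_params hε hr
  have hcf := imageCharge_eq hb hl0 hl1 hrbl hεbl hc0 hcs
  have hqf := imageWeight_eq hb hl0 hl1 hrbl hcf hρ0 hρ hq
  have hQ1 : 1 ≤ Q := hQ ▸ one_le_tsum_imageWeight hl0 hl1 hqf hsum
  set G := fun x ↦ ∑' n, q n * dipole (c n • e₁) x
  have hh₀G : ∀ x, h₀ x = -(1 / (4 * π * Q)) * G x := hh₀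
  have hG := fun t (ht : t ∈ Icc (-ε) ε) ↦ summable_and_differentiableAt_tsum_dipole_smul he hsum
    hεb (le_imageCharge hb.le hl0 hl1 hcf) ht
  have hGε : 1 / (4 * r) ≤ G (ε • e₁) := one_div_four_mul_le_tsum_dipole he hε hεb hl0 hl1
    hrbl hεbl hcf hqf (hG ε ⟨by linarith, le_rfl⟩).1
  have hgap : 1 / (8 * π) / (Q * r) ≤ |h₀ (ε • e₁) - h₀ (-(ε • e₁))| := by
    have hodd : h₀ (ε • e₁) - h₀ (-(ε • e₁)) = -(2 * (1 / (4 * π * Q)) * G (ε • e₁)) := by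
      rw [hh₀G, hh₀G, show G (-(ε • e₁)) = -G (ε • e₁) from tsum_dipole_neg _ _ _]
      ring
    have hG0 : 0 < G (ε • e₁) := lt_of_lt_of_le (by positivity) hGε
    rw [hodd, abs_neg, abs_of_pos (by positivity)]
    calc 1 / (8 * π) / (Q * r) = 2 * (1 / (4 * π * Q)) * (1 / (4 * r)) := by field_simp; ring
      _ ≤ _ := by gcongr
  have hdiff : ∀ t ∈ Icc (-ε) ε, DifferentiableAt ℝ h₀ (t • e₁) := fun t ht ↦ by
    rw [show h₀ = _ from funext hh₀G]
    exact (hG t ht).2.const_mul _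
  obtain ⟨t, ht, hslope⟩ := exists_fderiv_smul_eq_slope (by linarith : -ε < ε) hdiff
  have hderiv : 1 / (8 * π) / (2 * Q * r * ε) ≤ |fderiv ℝ h₀ (t • e₁) e₁| := by
    rw [hslope, neg_smul, sub_neg_eq_add, abs_div, abs_of_pos (by linarith : 0 < ε + ε)]
    calc 1 / (8 * π) / (2 * Q * r * ε) = 1 / (8 * π) / (Q * r) / (ε + ε) := by ring
      _ ≤ _ := by gcongr
  have hout := smul_notMem_closure_union_ball he hr ht
  refine ⟨hgap, ⟨t, ht, hout, hderiv⟩, t • e₁, hout, hderiv.trans ?_⟩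
  simpa [he] using (fderiv ℝ h₀ (t • e₁)).le_opNorm e₁
end
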